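/- arXiv:2203.02913 — 8 statements merged into one kernel-verified Lean document; each statement's English description precedes it below -/
import Mathlib

section
/- Let n, m be integers with n ≡ m (mod 2). Then for every λ ∈ ℂ such that 2λ is not an integer, one has q_{n,m}(−λ) · Γ(λ + (1+n)/2) · Γ(λ + (1−n)/2) = (−1)^{(m−n)/2} · q_{n,m}(λ) · Γ(λ + (1+m)/2) · Γ(λ + (1−m)/2). Equivalently, q_{n,m}(−λ)/q_{n,m}(λ) = (−1)^{(m−n)/2} · c_n(λ)/c_m(λ), where c_n is the Harish–Chandra c-function of SL(2,ℝ). -/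
open Finset in
/-- The polynomial `q_{n,m}` (Definition of `q_{n,m}` for `SL(2,ℝ)`), for integers
`n ≡ m (mod 2)`.  Here `0` is regarded as having the same sign as any integer, which is
encoded by the condition `0 ≤ n * m`. -/
noncomputable def qPoly (n m : ℤ) (z : ℂ) : ℂ :=
  if n = m then 1
  else if 0 ≤ n * m then
    if m.natAbs < n.natAbs then
      ∏ j ∈ range ((n.natAbs - m.natAbs) / 2), (z + (((m.natAbs : ℂ) + 1) / 2 + (j : ℂ)))
    else
      ∏ j ∈ range ((m.natAbs - n.natAbs) / 2), (z - (((n.natAbs : ℂ) + 1) / 2 + (j : ℂ)))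
  else
    ∏ j ∈ range ((n.natAbs + m.natAbs) / 2), (z + (((n.natAbs : ℂ) - 1) / 2 - (j : ℂ)))

private lemma hne' (z : ℂ) (hz : ∀ k : ℤ, 2 * z ≠ (k : ℂ)) (q : ℤ) : z + (q : ℂ) / 2 ≠ 0 := by
  intro h
  apply hz (-q)
  push_cast
  linear_combination 2 * h

private lemma prodReflect (K : ℕ) (g : ℂ → ℂ) :
    ∏ j ∈ Finset.range K, g ((K : ℂ) - 1 - (j : ℂ)) = ∏ j ∈ Finset.range K, g (j : ℂ) := by
  rw [← Finset.prod_range_reflect (fun j => g (j : ℂ)) K]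
  refine Finset.prod_congr rfl fun j hj => ?_
  have hj' : j < K := Finset.mem_range.mp hj
  have h1 : ((K - 1 - j : ℕ) : ℂ) = (K : ℂ) - 1 - (j : ℂ) := by
    have h2 : ((K - 1 - j : ℕ) : ℤ) = (K : ℤ) - 1 - (j : ℤ) := by omega
    calc ((K - 1 - j : ℕ) : ℂ) = (((K - 1 - j : ℕ) : ℤ) : ℂ) := by norm_cast
      _ = (((K : ℤ) - 1 - (j : ℤ) : ℤ) : ℂ) := by rw [h2]
      _ = (K : ℂ) - 1 - (j : ℂ) := by push_cast; ring
  rw [h1]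

private lemma core (z : ℂ) (hz : ∀ k : ℤ, 2 * z ≠ (k : ℂ)) (a : ℤ) (k : ℕ) :
    (∏ j ∈ Finset.range k, (z - (((a : ℂ) + 1) / 2 + (j : ℂ)))) *
        (Complex.Gamma (z + (1 + (a : ℂ)) / 2 + (k : ℂ)) *
          Complex.Gamma (z + (1 - (a : ℂ)) / 2 - (k : ℂ))) =
      (∏ j ∈ Finset.range k, (z + (((a : ℂ) + 1) / 2 + (j : ℂ)))) *
        (Complex.Gamma (z + (1 + (a : ℂ)) / 2) * Complex.Gamma (z + (1 - (a : ℂ)) / 2)) := by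
  induction k with
  | zero => simp
  | succ k ih =>
    have h0 : z + (1 + (a : ℂ)) / 2 + (k : ℂ) ≠ 0 := by
      intro h
      exact hne' z hz (a + 1 + 2 * k) (by push_cast; linear_combination h)
    have h1 : z + (1 - (a : ℂ)) / 2 - ((k : ℂ) + 1) ≠ 0 := by
      intro h
      exact hne' z hz (-(a + 1 + 2 * k)) (by push_cast; linear_combination h)
    have hw : Complex.Gamma (z + (1 + (a : ℂ)) / 2 + ((k : ℂ) + 1)) =
        (z + (((a : ℂ) + 1) / 2 + (k : ℂ))) * Complex.Gamma (z + (1 + (a : ℂ)) / 2 + (k : ℂ)) := by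
      have e : z + (1 + (a : ℂ)) / 2 + ((k : ℂ) + 1) = (z + (1 + (a : ℂ)) / 2 + (k : ℂ)) + 1 := by
        ring
      rw [e, Complex.Gamma_add_one _ h0]
      ring
    have hv : Complex.Gamma (z + (1 - (a : ℂ)) / 2 - (k : ℂ)) =
        (z - (((a : ℂ) + 1) / 2 + (k : ℂ))) *
          Complex.Gamma (z + (1 - (a : ℂ)) / 2 - ((k : ℂ) + 1)) := by
      have e : z + (1 - (a : ℂ)) / 2 - (k : ℂ) = (z + (1 - (a : ℂ)) / 2 - ((k : ℂ) + 1)) + 1 := by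
        ring
      rw [e, Complex.Gamma_add_one _ h1]
      ring
    rw [Finset.prod_range_succ, Finset.prod_range_succ]
    push_cast
    rw [hw]
    linear_combination (z + (((a : ℂ) + 1) / 2 + (k : ℂ))) * ih -
      (z + (((a : ℂ) + 1) / 2 + (k : ℂ))) *
        (∏ j ∈ Finset.range k, (z - (((a : ℂ) + 1) / 2 + (j : ℂ)))) *
        Complex.Gamma (z + (1 + (a : ℂ)) / 2 + (k : ℂ)) * hv

private lemma castSub (K j : ℕ) (hj : j < K) :
    ((K - 1 - j : ℕ) : ℂ) = (K : ℂ) - 1 - (j : ℂ) := by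
  have h2 : ((K - 1 - j : ℕ) : ℤ) = (K : ℤ) - 1 - (j : ℤ) := by omega
  calc ((K - 1 - j : ℕ) : ℂ) = (((K - 1 - j : ℕ) : ℤ) : ℂ) := by norm_cast
    _ = (((K : ℤ) - 1 - (j : ℤ) : ℤ) : ℂ) := by rw [h2]
    _ = (K : ℂ) - 1 - (j : ℂ) := by push_cast; ring

private lemma reflectCongr (K : ℕ) (f g : ℕ → ℂ)
    (h : ∀ j < K, f j = g (K - 1 - j)) :
    ∏ j ∈ Finset.range K, f j = ∏ j ∈ Finset.range K, g j := by
  rw [← Finset.prod_range_reflect g K]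
  exact Finset.prod_congr rfl fun j hj => h j (Finset.mem_range.mp hj)

private lemma castAbsPos (m : ℤ) (hm : 0 ≤ m) : ((m.natAbs : ℕ) : ℂ) = (m : ℂ) := by
  have h5 : (m.natAbs : ℕ) = m.toNat := by omega
  have h6 : ((m.toNat : ℕ) : ℤ) = m := Int.toNat_of_nonneg hm
  rw [h5, ← Int.cast_natCast (R := ℂ) m.toNat, h6]

private lemma castAbsNeg (m : ℤ) (hm : m ≤ 0) : ((m.natAbs : ℕ) : ℂ) = -(m : ℂ) := by
  have h5 : (m.natAbs : ℕ) = (-m).toNat := by omega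
  have h6 : (((-m).toNat : ℕ) : ℤ) = -m := Int.toNat_of_nonneg (by omega)
  rw [h5, ← Int.cast_natCast (R := ℂ) (-m).toNat, h6, Int.cast_neg]

private lemma castK (n m : ℤ) (h : m ≤ n) :
    ((((n - m) / 2).toNat : ℕ) : ℂ) = (((n - m) / 2 : ℤ) : ℂ) := by
  rw [← Int.cast_natCast (R := ℂ), Int.toNat_of_nonneg (by omega)]

private lemma castKpar (n m : ℤ) (hpar : n % 2 = m % 2) (h : m ≤ n) :
    ((((n - m) / 2).toNat : ℕ) : ℂ) = ((n : ℂ) - (m : ℂ)) / 2 := by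
  rw [castK n m h]
  have h3 : ((n - m) / 2 : ℤ) * 2 = n - m := by omega
  have h4 : (((n - m) / 2 : ℤ) : ℂ) * 2 = (n : ℂ) - (m : ℂ) := by exact_mod_cast h3
  field_simp
  linear_combination h4

private lemma qPoly_gt (n m : ℤ) (hpar : n % 2 = m % 2) (h : m < n) (z : ℂ) :
    qPoly n m z = ∏ j ∈ Finset.range ((n - m) / 2).toNat,
      (z + (((m : ℂ) + 1) / 2 + (j : ℂ))) := by
  have hK := castKpar n m hpar h.le
  have hnm : n ≠ m := by omega
  rw [qPoly, if_neg hnm]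
  by_cases hs : 0 ≤ n * m
  · rw [if_pos hs]
    by_cases hm : 0 ≤ m
    · rw [if_pos (by omega : m.natAbs < n.natAbs),
        (by omega : (n.natAbs - m.natAbs) / 2 = ((n - m) / 2).toNat), castAbsPos m hm]
    · push_neg at hm
      have hn : n ≤ 0 := by by_contra hc; push_neg at hc; nlinarith
      rw [if_neg (by omega : ¬ m.natAbs < n.natAbs),
        (by omega : (m.natAbs - n.natAbs) / 2 = ((n - m) / 2).toNat)]
      refine reflectCongr _ _ _ fun j hj => ?_
      rw [castSub _ _ hj, castAbsNeg n hn, hK]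
      ring
  · have hm : m < 0 := by by_contra hc; push_neg at hc; nlinarith
    have hn : 0 < n := by by_contra hc; push_neg at hc; nlinarith
    rw [if_neg hs, (by omega : (n.natAbs + m.natAbs) / 2 = ((n - m) / 2).toNat)]
    refine reflectCongr _ _ _ fun j hj => ?_
    rw [castSub _ _ hj, castAbsPos n hn.le, hK]
    ring

private lemma qPoly_lt (n m : ℤ) (hpar : n % 2 = m % 2) (h : n < m) (z : ℂ) :
    qPoly n m z = ∏ j ∈ Finset.range ((m - n) / 2).toNat,
      (z - (((n : ℂ) + 1) / 2 + (j : ℂ))) := by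
  have hK := castKpar m n hpar.symm h.le
  have hnm : n ≠ m := by omega
  rw [qPoly, if_neg hnm]
  by_cases hs : 0 ≤ n * m
  · rw [if_pos hs]
    by_cases hn : 0 ≤ n
    · rw [if_neg (by omega : ¬ m.natAbs < n.natAbs),
        (by omega : (m.natAbs - n.natAbs) / 2 = ((m - n) / 2).toNat), castAbsPos n hn]
    · push_neg at hn
      have hm : m ≤ 0 := by by_contra hc; push_neg at hc; nlinarith
      rw [if_pos (by omega : m.natAbs < n.natAbs),
        (by omega : (n.natAbs - m.natAbs) / 2 = ((m - n) / 2).toNat)]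
      refine reflectCongr _ _ _ fun j hj => ?_
      rw [castSub _ _ hj, castAbsNeg m hm, hK]
      ring
  · have hn : n < 0 := by by_contra hc; push_neg at hc; nlinarith
    have hm : 0 < m := by by_contra hc; push_neg at hc; nlinarith
    rw [if_neg hs, (by omega : (n.natAbs + m.natAbs) / 2 = ((m - n) / 2).toNat)]
    refine Finset.prod_congr rfl fun j hj => ?_
    rw [castAbsNeg n hn.le]
    ring

private lemma prodNeg (z : ℂ) (c : ℕ → ℂ) (K : ℕ) :
    ∏ j ∈ Finset.range K, (-z + c j) = (-1 : ℂ) ^ K * ∏ j ∈ Finset.range K, (z - c j) := by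
  calc ∏ j ∈ Finset.range K, (-z + c j) = ∏ j ∈ Finset.range K, ((-1) * (z - c j)) :=
        Finset.prod_congr rfl fun j _ => by ring
    _ = (∏ _j ∈ Finset.range K, (-1 : ℂ)) * ∏ j ∈ Finset.range K, (z - c j) :=
        Finset.prod_mul_distrib
    _ = (-1 : ℂ) ^ K * ∏ j ∈ Finset.range K, (z - c j) := by
        rw [Finset.prod_const, Finset.card_range]

private lemma prodNeg' (z : ℂ) (c : ℕ → ℂ) (K : ℕ) :
    ∏ j ∈ Finset.range K, (-z - c j) = (-1 : ℂ) ^ K * ∏ j ∈ Finset.range K, (z + c j) := by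
  calc ∏ j ∈ Finset.range K, (-z - c j) = ∏ j ∈ Finset.range K, ((-1) * (z + c j)) :=
        Finset.prod_congr rfl fun j _ => by ring
    _ = (∏ _j ∈ Finset.range K, (-1 : ℂ)) * ∏ j ∈ Finset.range K, (z + c j) :=
        Finset.prod_mul_distrib
    _ = (-1 : ℂ) ^ K * ∏ j ∈ Finset.range K, (z + c j) := by
        rw [Finset.prod_const, Finset.card_range]

example (k : ℕ) : ((-1 : ℂ)) ^ (-(k : ℤ)) = (-1 : ℂ) ^ k := by
  rw [zpow_neg, zpow_natCast, ← inv_pow]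
  norm_num

/-- For integers `n ≡ m (mod 2)` and any `λ ∈ ℂ` with `2λ` not an integer,
`q_{n,m}(-λ)/q_{n,m}(λ) = (-1)^{(m-n)/2} · c_n(λ)/c_m(λ)`, written without denominators
in terms of Gamma functions. -/
theorem stmt_2 (n m : ℤ) (hpar : n % 2 = m % 2)
    (z : ℂ) (hz : ∀ k : ℤ, 2 * z ≠ (k : ℂ)) :
    qPoly n m (-z) * Complex.Gamma (z + (1 + (n : ℂ)) / 2) *
        Complex.Gamma (z + (1 - (n : ℂ)) / 2) =
      (-1 : ℂ) ^ ((m - n) / 2) * qPoly n m z * Complex.Gamma (z + (1 + (m : ℂ)) / 2) *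
        Complex.Gamma (z + (1 - (m : ℂ)) / 2) := by
  rcases lt_trichotomy n m with h | h | h
  · -- n < m
    obtain ⟨K, hK⟩ : ∃ K : ℕ, m = n + 2 * (K : ℤ) := ⟨((m - n) / 2).toNat, by omega⟩
    have e0 : (m - n) / 2 = (K : ℤ) := by omega
    have eK : ((m - n) / 2).toNat = K := by omega
    have hm2 : (m : ℂ) = (n : ℂ) + 2 * (K : ℂ) := by exact_mod_cast hK
    have e1 : z + (1 + (m : ℂ)) / 2 = z + (1 + (n : ℂ)) / 2 + (K : ℂ) := by rw [hm2]; ring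
    have e2 : z + (1 - (m : ℂ)) / 2 = z + (1 - (n : ℂ)) / 2 - (K : ℂ) := by rw [hm2]; ring
    rw [qPoly_lt n m hpar h, qPoly_lt n m hpar h, eK, e0, zpow_natCast, e1, e2,
      prodNeg' z (fun j => (((n : ℂ) + 1) / 2 + (j : ℂ))) K]
    linear_combination (-((-1 : ℂ) ^ K)) * core z hz n K
  · -- n = m
    subst h
    simp [qPoly]
  · -- m < n
    obtain ⟨K, hK⟩ : ∃ K : ℕ, n = m + 2 * (K : ℤ) := ⟨((n - m) / 2).toNat, by omega⟩
    have e0 : (m - n) / 2 = -(K : ℤ) := by omega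
    have eK : ((n - m) / 2).toNat = K := by omega
    have hn2 : (n : ℂ) = (m : ℂ) + 2 * (K : ℂ) := by exact_mod_cast hK
    have esign : ((-1 : ℂ)) ^ (-(K : ℤ)) = (-1 : ℂ) ^ K := by
      rw [zpow_neg, zpow_natCast, ← inv_pow]; norm_num
    have e1 : z + (1 + (n : ℂ)) / 2 = z + (1 + (m : ℂ)) / 2 + (K : ℂ) := by rw [hn2]; ring
    have e2 : z + (1 - (n : ℂ)) / 2 = z + (1 - (m : ℂ)) / 2 - (K : ℂ) := by rw [hn2]; ring
    rw [qPoly_gt n m hpar h, qPoly_gt n m hpar h, eK, e0, esign, e1, e2,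
      prodNeg z (fun j => (((m : ℂ) + 1) / 2 + (j : ℂ))) K]
    linear_combination ((-1 : ℂ) ^ K) * core z hz m K
end

section
/- Let n, m be integers with n ≡ m (mod 2), and let φ : ℂ → ℂ be entire (holomorphic on all of ℂ). Then the following are equivalent: (i) φ(−λ) · q_{n,m}(λ) = φ(λ) · q_{n,m}(−λ) for all λ ∈ ℂ, and φ(λ₀) = 0 for every λ₀ ∈ ℂ with q_{n,m}(λ₀) = 0; (ii) there exists an entire function h : ℂ → ℂ with h(λ) = h(−λ) for all λ ∈ ℂ such that φ(λ) = h(λ) · q_{n,m}(λ) for all λ ∈ ℂ. (This is Theorem 'Intertwining conditions in Level 3' for SL(2,ℝ) in concrete form: condition (i) is the translation of Delorme's intertwining condition (D.3) into the Knapp–Stein functional equation together with vanishing at the zeros of q_{n,m}.) -/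
open Finset

theorem Differentiable.exists_eq_mul_sub {φ : ℂ → ℂ} (hφ : Differentiable ℂ φ) {a : ℂ}
    (ha : φ a = 0) : ∃ ψ : ℂ → ℂ, Differentiable ℂ ψ ∧ ∀ z, φ z = ψ z * (z - a) := by
  refine ⟨dslope φ a, ?_, fun z => ?_⟩
  · rw [← differentiableOn_univ, Complex.differentiableOn_dslope Filter.univ_mem]
    exact hφ.differentiableOn
  · have h := sub_smul_dslope φ a z
    rw [ha, sub_zero, smul_eq_mul] at h
    rw [← h, mul_comm]

theorem Differentiable.exists_eq_mul_prod_sub {φ : ℂ → ℂ} (hφ : Differentiable ℂ φ)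
    (s : Finset ℂ) (hs : ∀ a ∈ s, φ a = 0) :
    ∃ ψ : ℂ → ℂ, Differentiable ℂ ψ ∧ ∀ z, φ z = ψ z * ∏ a ∈ s, (z - a) := by
  classical
  induction s using Finset.induction_on generalizing φ with
  | empty => exact ⟨φ, hφ, fun z => by simp⟩
  | insert a s ha ih =>
    obtain ⟨ψ₀, hψ₀, hφψ₀⟩ := hφ.exists_eq_mul_sub (hs a (mem_insert_self a s))
    have hψ₀s : ∀ b ∈ s, ψ₀ b = 0 := fun b hb => by
      have hba : b - a ≠ 0 := sub_ne_zero.mpr (ne_of_mem_of_not_mem hb ha)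
      simpa [hba, hs b (mem_insert_of_mem hb)] using (hφψ₀ b).symm
    obtain ⟨ψ, hψ, hψ₀ψ⟩ := ih hψ₀ hψ₀s
    refine ⟨ψ, hψ, fun z => ?_⟩
    rw [prod_insert ha, hφψ₀, hψ₀ψ]
    ring

theorem prod_sub_ne_zero_of_notMem {R : Type*} [CommRing R] [IsDomain R] {s : Finset R} {z : R}
    (hz : z ∉ s) : ∏ a ∈ s, (z - a) ≠ 0 :=
  prod_ne_zero_iff.mpr fun _ ha hza => hz (sub_eq_zero.mp hza ▸ ha)

theorem Differentiable.functional_eq_and_vanishing_iff_exists_even_mul_prod_sub {φ : ℂ → ℂ}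
    (hφ : Differentiable ℂ φ) (s : Finset ℂ) :
    ((∀ z, φ (-z) * ∏ a ∈ s, (z - a) = φ z * ∏ a ∈ s, (-z - a)) ∧
      (∀ z, ∏ a ∈ s, (z - a) = 0 → φ z = 0)) ↔
    (∃ h : ℂ → ℂ, Differentiable ℂ h ∧ (∀ z, h z = h (-z)) ∧
      ∀ z, φ z = h z * ∏ a ∈ s, (z - a)) := by
  constructor
  · rintro ⟨hfun, hvan⟩
    obtain ⟨h, hh, hφh⟩ := hφ.exists_eq_mul_prod_sub s fun a ha =>
      hvan a (prod_eq_zero ha (sub_self a))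
    refine ⟨h, hh, fun z => ?_, hφh⟩
    have heven_off : ∀ z ∉ (s : Set ℂ) ∪ -(s : Set ℂ), h z - h (-z) = 0 := fun z hz => by
      simp only [Set.mem_union, Set.mem_neg, mem_coe, not_or] at hz
      have hfz := hfun z
      rw [hφh, hφh] at hfz
      refine (mul_eq_zero.mp ?_).resolve_right
        (mul_ne_zero (prod_sub_ne_zero_of_notMem hz.1) (prod_sub_ne_zero_of_notMem hz.2))
      linear_combination -hfz
    have hdense : Dense ((s : Set ℂ) ∪ -(s : Set ℂ))ᶜ :=
      ((s.finite_toSet.union s.finite_toSet.neg).countable).dense_compl ℂ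
    exact sub_eq_zero.mp (congrFun ((hh.sub (hh.comp differentiable_neg)).continuous.ext_on
      hdense continuous_const heven_off) z)
  · rintro ⟨h, -, heven, hφh⟩
    refine ⟨fun z => ?_, fun z hz => by rw [hφh, hz, mul_zero]⟩
    rw [hφh, hφh, ← heven]
    ring

theorem exists_finset_prod_range_sub_eq_prod_sub {R : Type*} [CommRing R] {c : ℕ → R}
    (hc : Function.Injective c) (k : ℕ) :
    ∃ s : Finset R, ∀ z, ∏ j ∈ range k, (z - c j) = ∏ a ∈ s, (z - a) := by
  classical
  exact ⟨(range k).image c, fun z => (prod_image fun _ _ _ _ hij => hc hij).symm⟩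

theorem exists_finset_qPoly_eq_prod_sub (n m : ℤ) :
    ∃ s : Finset ℂ, ∀ z, qPoly n m z = ∏ a ∈ s, (z - a) := by
  have injective_affine : ∀ (b d : ℂ), d ≠ 0 → Function.Injective fun j : ℕ => b + d * j :=
    fun b d hd i j hij => by simpa [hd] using hij
  unfold qPoly
  split_ifs
  · exact ⟨∅, fun z => by simp⟩
  · obtain ⟨s, hs⟩ := exists_finset_prod_range_sub_eq_prod_sub
      (injective_affine (-(((m.natAbs : ℂ) + 1) / 2)) (-1) (by norm_num))
      ((n.natAbs - m.natAbs) / 2)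
    exact ⟨s, fun z => by rw [← hs]; exact prod_congr rfl fun j _ => by ring⟩
  · obtain ⟨s, hs⟩ := exists_finset_prod_range_sub_eq_prod_sub
      (injective_affine (((n.natAbs : ℂ) + 1) / 2) 1 one_ne_zero) ((m.natAbs - n.natAbs) / 2)
    exact ⟨s, fun z => by rw [← hs]; exact prod_congr rfl fun j _ => by ring⟩
  · obtain ⟨s, hs⟩ := exists_finset_prod_range_sub_eq_prod_sub
      (injective_affine (-(((n.natAbs : ℂ) - 1) / 2)) 1 one_ne_zero) ((n.natAbs + m.natAbs) / 2)
    exact ⟨s, fun z => by rw [← hs]; exact prod_congr rfl fun j _ => by ring⟩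

theorem stmt_3_general (n m : ℤ) (φ : ℂ → ℂ) (hφ : Differentiable ℂ φ) :
    ((∀ z : ℂ, φ (-z) * qPoly n m z = φ z * qPoly n m (-z)) ∧
      (∀ z : ℂ, qPoly n m z = 0 → φ z = 0)) ↔
    (∃ h : ℂ → ℂ, Differentiable ℂ h ∧ (∀ z : ℂ, h z = h (-z)) ∧
      ∀ z : ℂ, φ z = h z * qPoly n m z) := by
  obtain ⟨s, hs⟩ := exists_finset_qPoly_eq_prod_sub n m
  simp only [hs]
  exact hφ.functional_eq_and_vanishing_iff_exists_even_mul_prod_sub s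

/-- Intertwining conditions in Level 3 for `SL(2,ℝ)`: an entire function
`φ : ℂ → ℂ` satisfies the Knapp–Stein functional equation together with vanishing at the
zeros of `q_{n,m}` if and only if `φ = h · q_{n,m}` for some even entire function `h`. -/
theorem stmt_3 (n m : ℤ) (hpar : n % 2 = m % 2) (φ : ℂ → ℂ) (hφ : Differentiable ℂ φ) :
    ((∀ z : ℂ, φ (-z) * qPoly n m z = φ z * qPoly n m (-z)) ∧
      (∀ z : ℂ, qPoly n m z = 0 → φ z = 0)) ↔
    (∃ h : ℂ → ℂ, Differentiable ℂ h ∧ (∀ z : ℂ, h z = h (-z)) ∧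
      ∀ z : ℂ, φ z = h z * qPoly n m z) :=
  stmt_3_general n m φ hφ
end

section
/- Let m be a nonnegative integer. Suppose that for each integer k with |k| ≤ m and k ≡ m (mod 2) we are given an entire function φ_k : ℂ → ℂ, and that these satisfy φ_k(λ) = φ_{−k}(−λ) for all such k and all λ ∈ ℂ, and φ_k(l) = φ_l(k) for all integers k, l with |k|, |l| ≤ m and k ≡ l ≡ m (mod 2). Then there exist unique entire functions h₀, h₁, …, h_m : ℂ → ℂ such that φ_k(λ) = Σ_{l=0}^{m} h_l(λ² + k²) · (kλ)^l for all integers k with |k| ≤ m, k ≡ m (mod 2), and all λ ∈ ℂ. (In other words, the algebra ₘA_m is a free Hol(ℂ)-module with the m+1 generators (kλ)^l, l = 0, …, m.) -/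
/-!
Split `φ_k` into its even and odd parts in `λ` and write them as `g_k(λ²)` and `kλ·g_k(λ²)`
with `g_k` entire; the symmetry `φ_k(l) = φ_l(k)` becomes `g_k(l²) = g_l(k²)`. A Newton-type
interpolation over the ring of entire functions then gives entire `H_j` with
`g_k(u) = Σ_j H_j(u + k²)·(k²u)^j`: removing one node `c`, the function
`g_k(u) - g_c(u + k² - c)` vanishes at `u = c`, hence is `(k² - c)(u - c)` times an entire
function, and these quotients are again symmetric.

For uniqueness, at a generic `w` the `m + 1` numbers `k·√(w - k²)` are pairwise distinct, so a
Vandermonde determinant forces all coefficients to vanish at `w`; continuity does the rest.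
-/

open Complex Finset

theorem Differentiable.dslope {f : ℂ → ℂ} (hf : Differentiable ℂ f) (c : ℂ) :
    Differentiable ℂ (dslope f c) :=
  differentiableOn_univ.1 <| (differentiableOn_dslope Filter.univ_mem).2 hf.differentiableOn

theorem Complex.cpow_inv_two_sq (w : ℂ) : (w ^ (2⁻¹ : ℂ)) ^ 2 = w := by
  exact_mod_cast cpow_nat_inv_pow w two_ne_zero

theorem Function.Even.eq_of_sq_eq {f : ℂ → ℂ} (hf : f.Even) {s t : ℂ} (h : s ^ 2 = t ^ 2) :
    f s = f t := by
  rcases sq_eq_sq_iff_eq_or_eq_neg.1 h with rfl | rfl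
  exacts [rfl, hf t]

/-- `g w = f √w` is independent of the branch of `√w`; near `w₀ ≠ 0` a holomorphic branch is
`s₀ √(w / w₀)`, and at `0` the singularity is removable. -/
theorem exists_differentiable_comp_sq_of_even {f : ℂ → ℂ} (hf : Differentiable ℂ f)
    (he : f.Even) : ∃ g : ℂ → ℂ, Differentiable ℂ g ∧ ∀ z, f z = g (z ^ 2) := by
  refine ⟨fun w => f (w ^ (2⁻¹ : ℂ)), ?_, fun z => he.eq_of_sq_eq (cpow_inv_two_sq _).symm⟩
  rw [← differentiableOn_univ,
    ← differentiableOn_compl_singleton_and_continuousAt_iff (c := 0) Filter.univ_mem]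
  refine ⟨fun w₀ hw₀ => ?_, hf.continuous.continuousAt.comp
    (continuousAt_cpow_const_of_re_pos (by simp) (by norm_num))⟩
  have hw₀ : w₀ ≠ 0 := hw₀.2
  have hbranch : (fun w => f (w ^ (2⁻¹ : ℂ))) =
      fun w => f (w₀ ^ (2⁻¹ : ℂ) * (w / w₀) ^ (2⁻¹ : ℂ)) := by
    funext w
    refine he.eq_of_sq_eq ?_
    rw [mul_pow, cpow_inv_two_sq, cpow_inv_two_sq, cpow_inv_two_sq]
    field_simp
  rw [hbranch]
  refine (hf.differentiableAt.comp w₀ (DifferentiableAt.const_mul ?_ _)).differentiableWithinAt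
  exact (differentiableAt_id.div_const w₀).cpow_const (by simp [hw₀])

theorem exists_differentiable_mul_comp_sq_of_odd {f : ℂ → ℂ} (hf : Differentiable ℂ f)
    (ho : f.Odd) : ∃ g : ℂ → ℂ, Differentiable ℂ g ∧ ∀ z, f z = z * g (z ^ 2) := by
  have hfactor : ∀ z, f z = z * dslope f 0 z := fun z => by
    simpa [ho.map_zero] using (sub_smul_dslope f 0 z).symm
  have heven : (dslope f 0).Even := fun z => by
    rcases eq_or_ne z 0 with rfl | hz
    · simp
    · refine mul_left_cancel₀ (neg_ne_zero.2 hz) ?_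
      rw [← hfactor, ho, hfactor, neg_mul]
  obtain ⟨g, hg, hfg⟩ := exists_differentiable_comp_sq_of_even (hf.dslope 0) heven
  exact ⟨g, hg, fun z => by rw [hfactor, hfg]⟩

theorem sum_range_succ_shift_sub_mul_pow {R : Type*} [CommRing R] (N : ℕ) (G y x : R)
    (K : ℕ → R) (hK : K N = 0) :
    ∑ r ∈ range (N + 1), ((if r = 0 then G else K (r - 1)) - y * K r) * x ^ r
      = G + (x - y) * ∑ j ∈ range N, K j * x ^ j := by
  have hshift : ∑ r ∈ range (N + 1), (if r = 0 then G else K (r - 1)) * x ^ r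
      = G + x * ∑ j ∈ range N, K j * x ^ j := by
    simp only [sum_range_succ', mul_sum, pow_succ]
    simp only [Nat.succ_ne_zero, if_false, Nat.add_sub_cancel, pow_zero, mul_one]
    rw [add_comm]
    congr 1
    exact sum_congr rfl fun j _ => by ring
  have htrunc : ∑ r ∈ range (N + 1), K r * x ^ r = ∑ j ∈ range N, K j * x ^ j := by
    simp [sum_range_succ _ N, hK]
  calc _ = ∑ r ∈ range (N + 1), (if r = 0 then G else K (r - 1)) * x ^ r
        - y * ∑ r ∈ range (N + 1), K r * x ^ r := by
          simp only [sub_mul, sum_sub_distrib, mul_sum, mul_assoc]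
    _ = _ := by rw [hshift, htrunc]; ring

theorem sum_range_eq_sum_even_add_sum_odd {M : Type*} [AddCommMonoid M] (f : ℕ → M) (n : ℕ) :
    ∑ l ∈ range n, f l
      = ∑ j ∈ range ((n + 1) / 2), f (2 * j) + ∑ j ∈ range (n / 2), f (2 * j + 1) := by
  induction n with
  | zero => simp
  | succ n ih =>
    rw [sum_range_succ, ih]
    obtain ⟨t, rfl | rfl⟩ := Nat.even_or_odd' n
    · rw [show (2 * t + 1 + 1) / 2 = t + 1 by omega, show (2 * t + 1) / 2 = t by omega,
        show 2 * t / 2 = t by omega, sum_range_succ]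
      abel
    · rw [show (2 * t + 1 + 1 + 1) / 2 = t + 1 by omega, show (2 * t + 1 + 1) / 2 = t + 1 by omega,
        show (2 * t + 1) / 2 = t by omega, sum_range_succ (fun j => f (2 * j + 1)) t]
      abel

theorem exists_newton_divided_difference (N : ℕ) (a : ℕ → ℂ) (c : ℂ) (hac : ∀ i < N, a i ≠ c)
    (G : ℂ → ℂ) (hG : Differentiable ℂ G) (g : ℕ → ℂ → ℂ) (hg : ∀ i < N, Differentiable ℂ (g i))
    (hgc : ∀ i < N, g i c = G (a i)) (hsym : ∀ i < N, ∀ j < N, g i (a j) = g j (a i)) :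
    ∃ f : ℕ → ℂ → ℂ, (∀ i < N, Differentiable ℂ (f i)) ∧
      (∀ i < N, ∀ j < N, f i (a j) = f j (a i)) ∧
      ∀ i < N, ∀ u, g i u = G (u + a i - c) + (a i - c) * (u - c) * f i u := by
  set F : ℕ → ℂ → ℂ := fun i u => g i u - G (u + a i - c)
  have hac' : ∀ i < N, a i - c ≠ 0 := fun i hi => sub_ne_zero.2 (hac i hi)
  have hfF : ∀ i < N, ∀ u, (a i - c) * (u - c) * ((a i - c)⁻¹ • dslope (F i) c) u = F i u :=
    fun i hi u => by
      have hFc : F i c = 0 := by simp [F, hgc i hi]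
      have := sub_smul_dslope (F i) c u
      simp only [Pi.smul_apply, smul_eq_mul, hFc, sub_zero] at this ⊢
      rw [← this]
      field_simp [hac' i hi]
  refine ⟨fun i => (a i - c)⁻¹ • dslope (F i) c,
    fun i hi => (((hg i hi).sub (hG.comp (by fun_prop))).dslope c).const_smul _,
    fun i hi j hj => mul_left_cancel₀ (mul_ne_zero (hac' i hi) (hac' j hj)) ?_,
    fun i hi u => by rw [hfF i hi u]; ring⟩
  calc _ = F i (a j) := hfF i hi _
    _ = F j (a i) := by simp only [F, hsym i hi j hj, add_comm (a j) (a i)]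
    _ = _ := by rw [← hfF j hj]; ring

theorem exists_newton_expansion (N : ℕ) (a : ℕ → ℂ) (ha : Set.InjOn a (Set.Iio N))
    (g : ℕ → ℂ → ℂ) (hg : ∀ i < N, Differentiable ℂ (g i))
    (hsym : ∀ i < N, ∀ j < N, g i (a j) = g j (a i)) :
    ∃ H : ℕ → ℂ → ℂ, (∀ j, Differentiable ℂ (H j)) ∧
      ∀ i < N, ∀ u, g i u = ∑ j ∈ range N, H j (u + a i) * (a i * u) ^ j := by
  induction N generalizing g with
  | zero => exact ⟨fun _ _ => 0, fun _ => differentiable_const 0, by simp⟩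
  | succ N ih =>
    set c := a N
    obtain ⟨f, hfd, hfsym, hgf⟩ := exists_newton_divided_difference N a c
      (fun i hi h => hi.ne (ha (Set.mem_Iio.2 (by omega)) (Set.mem_Iio.2 N.lt_succ_self) h))
      (g N) (hg N N.lt_succ_self) g (fun i hi => hg i (by omega))
      (fun i hi => hsym i (by omega) N N.lt_succ_self)
      (fun i hi j hj => hsym i (by omega) j (by omega))
    obtain ⟨K, hKd, hK⟩ := ih (ha.mono (Set.Iio_subset_Iio N.le_succ)) f hfd hfsym
    set K' : ℕ → ℂ → ℂ := fun j => if j < N then K j else 0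
    have hK'd : ∀ j, Differentiable ℂ (K' j) := fun j => by
      by_cases hj : j < N <;> simp [K', hj, hKd j]
    refine ⟨fun r v => (if r = 0 then g N (v - c) else K' (r - 1) v) - c * (v - c) * K' r v,
      fun r => ?_, fun i hi u => ?_⟩
    · refine Differentiable.sub ?_ (((differentiable_id.sub_const c).const_mul c).mul (hK'd r))
      by_cases hr : r = 0
      · simp only [hr, if_true]
        exact (hg N N.lt_succ_self).comp (differentiable_id.sub_const c)
      · simpa only [hr, if_false] using hK'd (r - 1)
    refine Eq.trans ?_ (sum_range_succ_shift_sub_mul_pow N (g N (u + a i - c))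
      (c * (u + a i - c)) (a i * u) (fun j => K' j (u + a i)) (by simp [K'])).symm
    rcases Nat.lt_succ_iff_lt_or_eq.1 hi with hi | rfl
    · have hK'K : ∑ j ∈ range N, K' j (u + a i) * (a i * u) ^ j
          = ∑ j ∈ range N, K j (u + a i) * (a i * u) ^ j :=
        sum_congr rfl fun j hj => by simp [K', mem_range.1 hj]
      rw [hK'K, ← hK i hi u, show a i * u - c * (u + a i - c) = (a i - c) * (u - c) by ring,
        hgf i hi u]
    · simp [c]

theorem exists_expansion_of_eq_pow_mul_comp_sq (N p : ℕ) (n : ℕ → ℂ)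
    (hn : Set.InjOn (fun i => n i ^ 2) (Set.Iio N)) (hn0 : ∀ i < N, n i ^ p ≠ 0)
    (ψ : ℕ → ℂ → ℂ)
    (hψ : ∀ i < N, ∃ g : ℂ → ℂ, Differentiable ℂ g ∧ ∀ z, ψ i z = (n i * z) ^ p * g (z ^ 2))
    (hsym : ∀ i < N, ∀ j < N, ψ i (n j) = ψ j (n i)) :
    ∃ H : ℕ → ℂ → ℂ, (∀ j, Differentiable ℂ (H j)) ∧
      ∀ i < N, ∀ z, ψ i z = ∑ j ∈ range N, H j (z ^ 2 + n i ^ 2) * (n i * z) ^ (2 * j + p) := by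
  have hψ' : ∀ i, ∃ g : ℂ → ℂ, Differentiable ℂ g ∧
      (i < N → ∀ z, ψ i z = (n i * z) ^ p * g (z ^ 2)) := fun i => by
    by_cases hi : i < N
    · obtain ⟨g, hg, hψg⟩ := hψ i hi
      exact ⟨g, hg, fun _ => hψg⟩
    · exact ⟨0, differentiable_const 0, fun h => absurd h hi⟩
  choose g hgd hψg using hψ'
  have hgsym : ∀ i < N, ∀ j < N, g i (n j ^ 2) = g j (n i ^ 2) := fun i hi j hj => by
    refine mul_left_cancel₀ (mul_ne_zero (hn0 i hi) (hn0 j hj)) ?_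
    calc n i ^ p * n j ^ p * g i (n j ^ 2) = ψ i (n j) := by rw [hψg i hi]; ring
      _ = ψ j (n i) := hsym i hi j hj
      _ = _ := by rw [hψg j hj]; ring
  obtain ⟨H, hHd, hH⟩ := exists_newton_expansion N (fun i => n i ^ 2) hn g (fun i _ => hgd i)
    hgsym
  refine ⟨H, hHd, fun i hi z => ?_⟩
  rw [hψg i hi, hH i hi, mul_sum]
  exact sum_congr rfl fun j _ => by ring

theorem Complex.eq_of_mul_cpow_inv_two_sub_sq_eq {w k k' : ℂ} (hw : w ≠ k ^ 2 + k' ^ 2) (hw' : w ≠ k ^ 2)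
    (h : k * (w - k ^ 2) ^ (2⁻¹ : ℂ) = k' * (w - k' ^ 2) ^ (2⁻¹ : ℂ)) : k = k' := by
  have hsq : k ^ 2 = k' ^ 2 := by
    have h2 := congrArg (· ^ 2) h
    simp only [mul_pow, cpow_inv_two_sq] at h2
    have : (k ^ 2 - k' ^ 2) * (w - (k ^ 2 + k' ^ 2)) = 0 := by linear_combination h2
    exact sub_eq_zero.1 ((mul_eq_zero.1 this).resolve_right (sub_ne_zero.2 hw))
  rcases sq_eq_sq_iff_eq_or_eq_neg.1 hsq with h' | h'
  · exact h'
  · rw [h', neg_sq] at h hw'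
    have hs : (w - k' ^ 2) ^ (2⁻¹ : ℂ) ≠ 0 := fun h0 =>
      hw' (sub_eq_zero.1 (by rw [← cpow_inv_two_sq (w - k' ^ 2), h0]; ring))
    have : k' * (w - k' ^ 2) ^ (2⁻¹ : ℂ) = 0 := by linear_combination -h / 2
    rw [h', (mul_eq_zero.1 this).resolve_right hs, neg_zero]

theorem eq_zero_of_sum_comp_sq_add_sq_mul_pow_eq_zero {n : ℕ} (k : Fin n → ℂ)
    (hk : Function.Injective k) (d : Fin n → ℂ → ℂ) (hd : ∀ l, Continuous (d l))
    (h : ∀ i z, ∑ l, d l (z ^ 2 + k i ^ 2) * (k i * z) ^ (l : ℕ) = 0) : d = 0 := by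
  set E : Set ℂ := Set.range (fun p : Fin n × Fin n => k p.1 ^ 2 + k p.2 ^ 2) ∪
    Set.range (fun i => k i ^ 2)
  have hgeneric : ∀ w ∉ E, ∀ l, d l w = 0 := fun w hw => by
    simp only [E, Set.mem_union, Set.mem_range, not_or, not_exists, Prod.forall] at hw
    refine congrFun (Matrix.eq_zero_of_forall_index_sum_mul_pow_eq_zero
      (f := fun i => k i * (w - k i ^ 2) ^ (2⁻¹ : ℂ)) (v := fun l => d l w)
      (fun i j hij => hk (eq_of_mul_cpow_inv_two_sub_sq_eq (hw.1 i j ·.symm) (hw.2 i ·.symm) hij))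
      fun i => ?_)
    have := h i ((w - k i ^ 2) ^ (2⁻¹ : ℂ))
    rwa [cpow_inv_two_sq, sub_add_cancel] at this
  have hdense : Dense Eᶜ := ((Set.countable_range _).union (Set.countable_range _)).dense_compl ℂ
  funext l
  exact Continuous.ext_on hdense (hd l) continuous_const fun w hw => hgeneric w hw l

/-- For `i ≤ m`, `node m i` runs through the indices `k ≡ m (mod 2)`, `|k| ≤ m`; the
nonnegative ones are those with `i ≤ m / 2`. -/
def node (m i : ℕ) : ℤ := m - 2 * i

theorem node_natAbs_le {m i : ℕ} (hi : i ≤ m) : (node m i).natAbs ≤ m := by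
  unfold node; omega

theorem node_emod_two (m i : ℕ) : node m i % 2 = (m : ℤ) % 2 := by
  unfold node; omega

theorem node_injective (m : ℕ) : Function.Injective (node m) := fun i j h => by
  unfold node at h; omega

theorem exists_node_eq {m : ℕ} {k : ℤ} (hk : k.natAbs ≤ m) (hpk : k % 2 = (m : ℤ) % 2) :
    ∃ i ≤ m / 2, k = node m i ∨ k = -node m i :=
  ⟨(m - k.natAbs) / 2, by omega, by unfold node; omega⟩

theorem injOn_sq_node (m : ℕ) :
    Set.InjOn (fun i => ((node m i : ℤ) : ℂ) ^ 2) (Set.Iio (m / 2 + 1)) := fun i hi j hj h => by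
  have hsq : node m i ^ 2 = node m j ^ 2 := Int.cast_injective (α := ℂ) (by push_cast; exact h)
  have := Int.natAbs_eq_iff_sq_eq.2 hsq
  simp only [Set.mem_Iio] at hi hj
  unfold node at this; omega

theorem apply_neg_comm {m : ℕ} {φ : ℤ → ℂ → ℂ}
    (hsym : ∀ k : ℤ, k.natAbs ≤ m → k % 2 = (m : ℤ) % 2 → ∀ z : ℂ, φ k z = φ (-k) (-z))
    (hint : ∀ k l : ℤ, k.natAbs ≤ m → l.natAbs ≤ m →
      k % 2 = (m : ℤ) % 2 → l % 2 = (m : ℤ) % 2 → φ k (l : ℂ) = φ l (k : ℂ))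
    {k l : ℤ} (hk : k.natAbs ≤ m) (hl : l.natAbs ≤ m)
    (hpk : k % 2 = (m : ℤ) % 2) (hpl : l % 2 = (m : ℤ) % 2) :
    φ k (-(l : ℂ)) = φ l (-(k : ℂ)) := by
  rw [hsym k hk hpk, neg_neg, hint (-k) l (by omega) hl (by omega) hpl, Int.cast_neg]

theorem exists_even_part_expansion {m : ℕ} {φ : ℤ → ℂ → ℂ}
    (hdiff : ∀ k : ℤ, k.natAbs ≤ m → k % 2 = (m : ℤ) % 2 → Differentiable ℂ (φ k))
    (hsym : ∀ k : ℤ, k.natAbs ≤ m → k % 2 = (m : ℤ) % 2 → ∀ z : ℂ, φ k z = φ (-k) (-z))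
    (hint : ∀ k l : ℤ, k.natAbs ≤ m → l.natAbs ≤ m →
      k % 2 = (m : ℤ) % 2 → l % 2 = (m : ℤ) % 2 → φ k (l : ℂ) = φ l (k : ℂ)) :
    ∃ H : ℕ → ℂ → ℂ, (∀ j, Differentiable ℂ (H j)) ∧ ∀ i ≤ m / 2, ∀ z,
      (φ (node m i) z + φ (node m i) (-z)) / 2
        = ∑ j ∈ range (m / 2 + 1),
            H j (z ^ 2 + (node m i : ℂ) ^ 2) * ((node m i : ℂ) * z) ^ (2 * j) := by
  have hadm : ∀ i < m / 2 + 1, (node m i).natAbs ≤ m := fun i hi => node_natAbs_le (by omega)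
  have hrep : ∀ i < m / 2 + 1, ∃ g : ℂ → ℂ, Differentiable ℂ g ∧
      ∀ z, (φ (node m i) z + φ (node m i) (-z)) / 2 = ((node m i : ℂ) * z) ^ 0 * g (z ^ 2) :=
    fun i hi => by
      have hφ := hdiff _ (hadm i hi) (node_emod_two m i)
      obtain ⟨g, hg, hfg⟩ := exists_differentiable_comp_sq_of_even
        (f := fun z => (φ (node m i) z + φ (node m i) (-z)) / 2) (by fun_prop)
        fun z => by simp only [neg_neg, add_comm]
      exact ⟨g, hg, by simpa using hfg⟩
  obtain ⟨H, hHd, hH⟩ := exists_expansion_of_eq_pow_mul_comp_sq (m / 2 + 1) 0 (fun i => node m i)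
    (injOn_sq_node m) (by simp) _ hrep fun i hi j hj => by
      rw [hint _ _ (hadm i hi) (hadm j hj) (node_emod_two m i) (node_emod_two m j),
        apply_neg_comm hsym hint (hadm i hi) (hadm j hj) (node_emod_two m i) (node_emod_two m j)]
  exact ⟨H, hHd, fun i hi z => by simpa using hH i (by omega) z⟩

theorem exists_odd_part_expansion {m : ℕ} {φ : ℤ → ℂ → ℂ}
    (hdiff : ∀ k : ℤ, k.natAbs ≤ m → k % 2 = (m : ℤ) % 2 → Differentiable ℂ (φ k))
    (hsym : ∀ k : ℤ, k.natAbs ≤ m → k % 2 = (m : ℤ) % 2 → ∀ z : ℂ, φ k z = φ (-k) (-z))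
    (hint : ∀ k l : ℤ, k.natAbs ≤ m → l.natAbs ≤ m →
      k % 2 = (m : ℤ) % 2 → l % 2 = (m : ℤ) % 2 → φ k (l : ℂ) = φ l (k : ℂ)) :
    ∃ H : ℕ → ℂ → ℂ, (∀ j, Differentiable ℂ (H j)) ∧ ∀ i ≤ m / 2, ∀ z,
      (φ (node m i) z - φ (node m i) (-z)) / 2
        = ∑ j ∈ range ((m + 1) / 2),
            H j (z ^ 2 + (node m i : ℂ) ^ 2) * ((node m i : ℂ) * z) ^ (2 * j + 1) := by
  have hadm : ∀ i < (m + 1) / 2, (node m i).natAbs ≤ m := fun i hi => node_natAbs_le (by omega)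
  have hn0 : ∀ i < (m + 1) / 2, (node m i : ℂ) ≠ 0 := fun i hi =>
    Int.cast_ne_zero.2 (by unfold node; omega)
  have hrep : ∀ i < (m + 1) / 2, ∃ g : ℂ → ℂ, Differentiable ℂ g ∧
      ∀ z, (φ (node m i) z - φ (node m i) (-z)) / 2 = ((node m i : ℂ) * z) ^ 1 * g (z ^ 2) :=
    fun i hi => by
      have hφ := hdiff _ (hadm i hi) (node_emod_two m i)
      obtain ⟨q, hq, hfq⟩ := exists_differentiable_mul_comp_sq_of_odd
        (f := fun z => (φ (node m i) z - φ (node m i) (-z)) / 2) (by fun_prop)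
        fun z => by simp only [neg_neg]; ring
      refine ⟨fun w => (node m i : ℂ)⁻¹ * q w, hq.const_mul _, fun z => ?_⟩
      rw [hfq z, pow_one]
      field_simp [hn0 i hi]
  obtain ⟨H, hHd, hH⟩ := exists_expansion_of_eq_pow_mul_comp_sq ((m + 1) / 2) 1
    (fun i => node m i) ((injOn_sq_node m).mono (Set.Iio_subset_Iio (by omega)))
    (fun i hi => by simpa using hn0 i hi) _ hrep fun i hi j hj => by
      rw [hint _ _ (hadm i hi) (hadm j hj) (node_emod_two m i) (node_emod_two m j),
        apply_neg_comm hsym hint (hadm i hi) (hadm j hj) (node_emod_two m i) (node_emod_two m j)]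
  refine ⟨H, hHd, fun i hi z => ?_⟩
  by_cases hiN : i < (m + 1) / 2
  · exact hH i hiN z
  · have hφ0 := hsym 0 (by simp) (by omega) z
    rw [neg_zero] at hφ0
    rw [show node m i = 0 by unfold node; omega, ← hφ0]
    simp

theorem exists_expansion_at_node {m : ℕ} {φ : ℤ → ℂ → ℂ}
    (hdiff : ∀ k : ℤ, k.natAbs ≤ m → k % 2 = (m : ℤ) % 2 → Differentiable ℂ (φ k))
    (hsym : ∀ k : ℤ, k.natAbs ≤ m → k % 2 = (m : ℤ) % 2 → ∀ z : ℂ, φ k z = φ (-k) (-z))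
    (hint : ∀ k l : ℤ, k.natAbs ≤ m → l.natAbs ≤ m →
      k % 2 = (m : ℤ) % 2 → l % 2 = (m : ℤ) % 2 → φ k (l : ℂ) = φ l (k : ℂ)) :
    ∃ h : ℕ → ℂ → ℂ, (∀ l, Differentiable ℂ (h l)) ∧ ∀ i ≤ m / 2, ∀ z,
      φ (node m i) z
        = ∑ l ∈ range (m + 1), h l (z ^ 2 + (node m i : ℂ) ^ 2) * ((node m i : ℂ) * z) ^ l := by
  obtain ⟨HE, hHEd, hHE⟩ := exists_even_part_expansion hdiff hsym hint
  obtain ⟨HO, hHOd, hHO⟩ := exists_odd_part_expansion hdiff hsym hint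
  refine ⟨fun l => if l % 2 = 0 then HE (l / 2) else HO (l / 2),
    fun l => by by_cases hl : l % 2 = 0 <;> simp [hl, hHEd, hHOd], fun i hi z => ?_⟩
  have heven : ∀ j, (if 2 * j % 2 = 0 then HE (2 * j / 2) else HO (2 * j / 2)) = HE j :=
    fun j => by rw [if_pos (by omega), show 2 * j / 2 = j by omega]
  have hodd : ∀ j, (if (2 * j + 1) % 2 = 0 then HE ((2 * j + 1) / 2) else HO ((2 * j + 1) / 2))
      = HO j := fun j => by rw [if_neg (by omega), show (2 * j + 1) / 2 = j by omega]
  calc φ (node m i) z = (φ (node m i) z + φ (node m i) (-z)) / 2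
        + (φ (node m i) z - φ (node m i) (-z)) / 2 := by ring
    _ = _ := by
      rw [hHE i hi z, hHO i hi z, sum_range_eq_sum_even_add_sum_odd _ (m + 1),
        show (m + 1 + 1) / 2 = m / 2 + 1 by omega]
      simp only [heven, hodd]

/-- the algebra `ₘA_m` is a free `Hol(ℂ)`-module with the `m+1` generators
`(kλ)^l`, `l = 0, …, m`: every symmetric tuple `(φ_k)` of entire functions (indexed by
the integers `k` with `|k| ≤ m`, `k ≡ m (mod 2)`) satisfying `φ_k(λ) = φ_{-k}(-λ)` and
`φ_k(l) = φ_l(k)` admits a unique representation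
`φ_k(λ) = Σ_{l=0}^{m} h_l(λ² + k²)·(kλ)^l` with `h_0, …, h_m` entire. -/
theorem stmt_6 (m : ℕ) (φ : ℤ → ℂ → ℂ)
    (hdiff : ∀ k : ℤ, k.natAbs ≤ m → k % 2 = (m : ℤ) % 2 → Differentiable ℂ (φ k))
    (hsym : ∀ k : ℤ, k.natAbs ≤ m → k % 2 = (m : ℤ) % 2 → ∀ z : ℂ, φ k z = φ (-k) (-z))
    (hint : ∀ k l : ℤ, k.natAbs ≤ m → l.natAbs ≤ m →
      k % 2 = (m : ℤ) % 2 → l % 2 = (m : ℤ) % 2 → φ k (l : ℂ) = φ l (k : ℂ)) :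
    ∃! h : Fin (m + 1) → ℂ → ℂ,
      (∀ l : Fin (m + 1), Differentiable ℂ (h l)) ∧
      ∀ k : ℤ, k.natAbs ≤ m → k % 2 = (m : ℤ) % 2 → ∀ z : ℂ,
        φ k z = ∑ l : Fin (m + 1), h l (z ^ 2 + (k : ℂ) ^ 2) * ((k : ℂ) * z) ^ (l : ℕ) := by
  obtain ⟨h, hd, hnode⟩ := exists_expansion_at_node hdiff hsym hint
  have hrep : ∀ k : ℤ, k.natAbs ≤ m → k % 2 = (m : ℤ) % 2 → ∀ z : ℂ,
      φ k z = ∑ l : Fin (m + 1), h l (z ^ 2 + (k : ℂ) ^ 2) * ((k : ℂ) * z) ^ (l : ℕ) := by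
    intro k hk hpk z
    rw [Fin.sum_univ_eq_sum_range (fun l => h l (z ^ 2 + (k : ℂ) ^ 2) * ((k : ℂ) * z) ^ l)]
    obtain ⟨i, hi, rfl | rfl⟩ := exists_node_eq hk hpk
    · exact hnode i hi z
    · rw [hsym _ hk hpk, neg_neg, hnode i hi (-z)]
      simp only [Int.cast_neg, neg_sq, mul_neg, neg_mul]
  refine ⟨fun l => h l, ⟨fun l => hd l, hrep⟩, fun h' ⟨hd', hrep'⟩ => ?_⟩
  have hzero := eq_zero_of_sum_comp_sq_add_sq_mul_pow_eq_zero
    (fun i : Fin (m + 1) => (node m i : ℂ))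
    (Int.cast_injective.comp ((node_injective m).comp Fin.val_injective))
    (fun l w => h' l w - h l w) (fun l => (hd' l).continuous.sub (hd l).continuous)
    fun i z => by
      have hk := node_natAbs_le i.is_le
      simp only [sub_mul, sum_sub_distrib]
      rw [← hrep' _ hk (node_emod_two m i) z, ← hrep _ hk (node_emod_two m i) z, sub_self]
  funext l w
  simpa [sub_eq_zero] using congrFun (congrFun hzero l) w
end

section
/- Let m be a nonnegative integer. Suppose that for each integer k with |k| ≤ m and k ≡ m (mod 2) we are given a polynomial function φ_k : ℂ → ℂ, and that these satisfy φ_k(λ) = φ_{−k}(−λ) for all such k and all λ ∈ ℂ, and φ_k(l) = φ_l(k) for all integers k, l with |k|, |l| ≤ m and k ≡ l ≡ m (mod 2). Then there exist polynomials h₀, h₁, …, h_m ∈ ℂ[X] such that φ_k(λ) = Σ_{l=0}^{m} h_l(λ² + k²) · (kλ)^l for all integers k with |k| ≤ m, k ≡ m (mod 2), and all λ ∈ ℂ. (In other words, ₘPol_m is a free Pol(ℂ)-module with the m+1 generators (kλ)^l, l = 0, …, m.) -/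
/-!
Split `φ_k(λ) = E_k(λ²) + λ O_k(λ²)`. For `k, l ≥ 0` the two hypotheses, applied at `λ = ±l`,
give `E_k(l²) = E_l(k²)` and `l O_k(l²) = k O_l(k²)`, while `O_0 = 0` by the symmetry. So `(E_k)`
and `(O_k / k)_{k > 0}` are families `(g_a)` indexed by the distinct points `a = k²` with
`g_a(b) = g_b(a)`, and such a family is interpolated by a symmetric polynomial:
`g_a(t) = P(t + a, a t)`, where `P` has degree less than the number of points in its second
variable. This is an induction on the points: subtract `g_{a₀}(s - a₀)` and divide what remains
by `x - a₀ (s - a₀)`, which equals `(a - a₀)(t - a₀)`.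
Hence `φ_k(λ) = P_E(λ² + k², (kλ)²) + kλ P_O(λ² + k², (kλ)²)` for `k ≥ 0`, and the symmetry
`φ_k(λ) = φ_{-k}(-λ)` covers negative `k`.
-/

open Polynomial Finset

namespace Polynomial

variable {R : Type*} [CommSemiring R]

theorem exists_eq_expand_two_add_X_mul_expand_two (p : R[X]) :
    ∃ e o : R[X], p = expand R 2 e + X * expand R 2 o := by
  induction p using Polynomial.induction_on' with
  | add p q hp hq =>
    obtain ⟨e₁, o₁, rfl⟩ := hp
    obtain ⟨e₂, o₂, rfl⟩ := hq
    exact ⟨e₁ + e₂, o₁ + o₂, by simp only [map_add]; ring⟩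
  | monomial n c =>
    obtain ⟨i, rfl | rfl⟩ := Nat.even_or_odd' n
    · exact ⟨monomial i c, 0, by simp [expand_monomial, mul_comm]⟩
    · refine ⟨0, monomial i c, ?_⟩
      simp [expand_monomial, X_mul_monomial, add_comm, mul_comm]

theorem evalEval_expand (n : ℕ) (x y : R) (p : R[X][X]) :
    (expand R[X] n p).evalEval x y = p.evalEval x (y ^ n) := by
  simp [evalEval, expand_eval]

theorem evalEval_eq_sum_fin {P : R[X][X]} {n : ℕ}
    (hP : P.natDegree < n) (x y : R) :
    P.evalEval x y = ∑ l : Fin n, (P.coeff l).eval x * y ^ (l : ℕ) := by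
  rw [evalEval, eval_eq_sum_range' hP, eval_finsetSum, ← Fin.sum_univ_eq_sum_range]
  simp

theorem natDegree_expand_two_add_X_mul_expand_two_le {e o : R[X]}
    {m : ℕ} (he : e.degree < ↑(m / 2 + 1)) (ho : o.degree < ↑((m + 1) / 2)) :
    (expand R 2 e + X * expand R 2 o).natDegree ≤ m := by
  refine natDegree_le_iff_coeff_eq_zero.2 fun N hN => ?_
  obtain ⟨N, rfl⟩ : ∃ N', N = N' + 1 := ⟨N - 1, by omega⟩
  have hcoeff {p : R[X]} {a : ℕ} (hp : p.degree < a) (b : ℕ) (hab : a ≤ b) : p.coeff b = 0 :=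
    coeff_eq_zero_of_degree_lt (hp.trans_le (by exact_mod_cast hab))
  rw [coeff_add, coeff_X_mul, coeff_expand two_pos, coeff_expand two_pos]
  split_ifs with h₁ h₂ h₂
  · omega
  · rw [hcoeff he _ (by omega), zero_add]
  · rw [hcoeff ho _ (by omega), add_zero]
  · rw [add_zero]

end Polynomial

section Interpolation

variable {F : Type*} [Field F]

theorem exists_divided_difference {p q : F[X]} {a b : F} (hab : a ≠ b)
    (h : p.eval b = q.eval a) :
    ∃ r : F[X], ∀ t, p.eval t - q.eval (t + a - b) = (a - b) * (t - b) * r.eval t := by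
  set D := p - q.comp (X + C (a - b))
  have hD : D.IsRoot b := by simp [D, h]
  refine ⟨C (a - b)⁻¹ * (D /ₘ (X - C b)), fun t => ?_⟩
  have hfac := congrArg (eval t) (mul_divByMonic_eq_iff_isRoot.2 hD)
  simp only [D, eval_mul, eval_sub, eval_comp, eval_add, eval_X, eval_C] at hfac ⊢
  rw [← add_sub_assoc] at hfac
  rw [← hfac]
  field_simp [sub_ne_zero.2 hab]

theorem exists_symmetric_interpolation {ι : Type*} (s : Finset ι) (a : ι → F)
    (ha : Set.InjOn a s) (g : ι → F[X])
    (hg : ∀ i ∈ s, ∀ j ∈ s, (g i).eval (a j) = (g j).eval (a i)) :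
    ∃ P : F[X][X], P.degree < #s ∧
      ∀ i ∈ s, ∀ t, (g i).eval t = P.evalEval (t + a i) (a i * t) := by
  classical
  induction s using Finset.induction_on generalizing g with
  | empty => exact ⟨0, by simp, by simp⟩
  | insert i₀ s hi₀ ih =>
    have hne : ∀ j ∈ s, a j ≠ a i₀ := fun j hj h =>
      hi₀ (ha (by simp [hj]) (by simp) h ▸ hj)
    choose! r hr using fun j (hj : j ∈ s) =>
      exists_divided_difference (hne j hj) (hg j (mem_insert_of_mem hj) i₀ (mem_insert_self _ _))
    have hr_symm : ∀ j ∈ s, ∀ l ∈ s, (r j).eval (a l) = (r l).eval (a j) := by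
      intro j hj l hl
      have hj' := hr j hj (a l)
      have hl' := hr l hl (a j)
      rw [add_comm] at hl'
      refine mul_left_cancel₀ (mul_ne_zero (sub_ne_zero.2 (hne j hj)) (sub_ne_zero.2 (hne l hl))) ?_
      linear_combination hl' - hj' + hg j (mem_insert_of_mem hj) l (mem_insert_of_mem hl)
    obtain ⟨P, hdeg, hP⟩ := ih (ha.mono (by simp)) r hr_symm
    -- At `s = t + a`, `x = a t` the factor `x - a₀ (s - a₀)` equals `(a - a₀) (t - a₀)`.
    refine ⟨C ((g i₀).comp (X - C (a i₀))) + (X - C (C (a i₀) * (X - C (a i₀)))) * P, ?_, ?_⟩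
    · rw [card_insert_of_notMem hi₀]
      refine (degree_add_le _ _).trans_lt (max_lt ((degree_C_le).trans_lt ?_) ?_)
      · exact_mod_cast Nat.succ_pos _
      · rw [degree_mul, degree_X_sub_C, add_comm, Nat.cast_succ]
        exact WithBot.add_lt_add_right (by simp) hdeg
    · intro j hj t
      simp only [evalEval_add, evalEval_mul, evalEval_C, evalEval_sub, evalEval_X, eval_comp,
        eval_sub, eval_mul, eval_X, eval_C]
      rcases mem_insert.1 hj with rfl | hj
      · ring_nf
      · rw [← hP j hj]
        linear_combination hr j hj t

end Interpolation

theorem exists_even_rep (S : Finset ℤ) (hS : ∀ k ∈ S, 0 ≤ k) (E : ℤ → ℂ[X])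
    (hE : ∀ k ∈ S, ∀ l ∈ S, (E k).eval ((l : ℂ) ^ 2) = (E l).eval ((k : ℂ) ^ 2)) :
    ∃ Q : ℂ[X][X], Q.degree < #S ∧
      ∀ k ∈ S, ∀ z : ℂ,
        (E k).eval (z ^ 2) = Q.evalEval (z ^ 2 + (k : ℂ) ^ 2) (((k : ℂ) * z) ^ 2) := by
  have hinj : Set.InjOn (fun k : ℤ => (k : ℂ) ^ 2) S := fun k hk l hl hkl => by
    have hkl : (k : ℂ) ^ 2 = (l : ℂ) ^ 2 := hkl
    exact (sq_eq_sq₀ (hS k hk) (hS l hl)).1 (by exact_mod_cast hkl)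
  obtain ⟨Q, hdeg, hQ⟩ := exists_symmetric_interpolation S _ hinj E hE
  exact ⟨Q, hdeg, fun k hk z => by rw [hQ k hk, mul_pow]⟩

theorem exists_odd_rep (S : Finset ℤ) (hS : ∀ k ∈ S, 0 < k) (O : ℤ → ℂ[X])
    (hO : ∀ k ∈ S, ∀ l ∈ S, (l : ℂ) * (O k).eval ((l : ℂ) ^ 2) = k * (O l).eval ((k : ℂ) ^ 2)) :
    ∃ Q : ℂ[X][X], Q.degree < #S ∧ ∀ k ∈ S, ∀ z : ℂ,
      z * (O k).eval (z ^ 2) = k * z * Q.evalEval (z ^ 2 + (k : ℂ) ^ 2) (((k : ℂ) * z) ^ 2) := by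
  have hne : ∀ k ∈ S, (k : ℂ) ≠ 0 := fun k hk => by exact_mod_cast (hS k hk).ne'
  obtain ⟨Q, hdeg, hQ⟩ := exists_even_rep S (fun k hk => (hS k hk).le)
    (fun k => C (k : ℂ)⁻¹ * O k) fun k hk l hl => by
      simp only [eval_mul, eval_C]
      field_simp [hne k hk, hne l hl]
      linear_combination hO k hk l hl
  refine ⟨Q, hdeg, fun k hk z => ?_⟩
  rw [← hQ k hk, eval_mul, eval_C]
  field_simp [hne k hk]

def nonnegIndices (m : ℕ) : Finset ℤ := (range (m / 2 + 1)).image fun r : ℕ => (m : ℤ) - 2 * r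

def posIndices (m : ℕ) : Finset ℤ := (range ((m + 1) / 2)).image fun r : ℕ => (m : ℤ) - 2 * r

theorem mem_nonnegIndices {m : ℕ} {k : ℤ} :
    k ∈ nonnegIndices m ↔ 0 ≤ k ∧ k.natAbs ≤ m ∧ k % 2 = (m : ℤ) % 2 := by
  simp only [nonnegIndices, mem_image, mem_range]
  constructor
  · rintro ⟨r, hr, rfl⟩
    omega
  · rintro ⟨h0, hm, hpar⟩
    exact ⟨(m - k.toNat) / 2, by omega, by omega⟩

theorem mem_posIndices {m : ℕ} {k : ℤ} :
    k ∈ posIndices m ↔ 0 < k ∧ k.natAbs ≤ m ∧ k % 2 = (m : ℤ) % 2 := by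
  simp only [posIndices, mem_image, mem_range]
  constructor
  · rintro ⟨r, hr, rfl⟩
    omega
  · rintro ⟨h0, hm, hpar⟩
    exact ⟨(m - k.toNat) / 2, by omega, by omega⟩

theorem even_odd_relations {m : ℕ} {φ : ℤ → ℂ → ℂ} {E O : ℤ → ℂ[X]}
    (hdec : ∀ k ∈ nonnegIndices m, ∀ z, φ k z = (E k).eval (z ^ 2) + z * (O k).eval (z ^ 2))
    (hsym : ∀ k : ℤ, k.natAbs ≤ m → k % 2 = (m : ℤ) % 2 → ∀ z : ℂ, φ k z = φ (-k) (-z))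
    (hint : ∀ k l : ℤ, k.natAbs ≤ m → l.natAbs ≤ m →
      k % 2 = (m : ℤ) % 2 → l % 2 = (m : ℤ) % 2 → φ k (l : ℂ) = φ l (k : ℂ))
    {k l : ℤ} (hk : k ∈ nonnegIndices m) (hl : l ∈ nonnegIndices m) :
    (E k).eval ((l : ℂ) ^ 2) = (E l).eval ((k : ℂ) ^ 2) ∧
      (l : ℂ) * (O k).eval ((l : ℂ) ^ 2) = k * (O l).eval ((k : ℂ) ^ 2) := by
  obtain ⟨-, hkm, hk2⟩ := mem_nonnegIndices.1 hk
  obtain ⟨-, hlm, hl2⟩ := mem_nonnegIndices.1 hl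
  have hplus := hint k l hkm hlm hk2 hl2
  have hminus : φ k (-l) = φ l (-k) := by
    rw [hsym k hkm hk2, neg_neg, ← Int.cast_neg,
      hint (-k) l (by omega) hlm (by omega) hl2, Int.cast_neg]
  rw [hdec k hk, hdec l hl] at hplus hminus
  simp only [neg_sq] at hminus
  constructor
  · linear_combination (hplus + hminus) / 2
  · linear_combination (hplus - hminus) / 2

theorem exists_bivariate_rep_nonnegIndices {m : ℕ} {φ : ℤ → ℂ → ℂ}
    (hpoly : ∀ k : ℤ, k.natAbs ≤ m → k % 2 = (m : ℤ) % 2 →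
      ∃ p : Polynomial ℂ, ∀ z : ℂ, φ k z = p.eval z)
    (hsym : ∀ k : ℤ, k.natAbs ≤ m → k % 2 = (m : ℤ) % 2 → ∀ z : ℂ, φ k z = φ (-k) (-z))
    (hint : ∀ k l : ℤ, k.natAbs ≤ m → l.natAbs ≤ m →
      k % 2 = (m : ℤ) % 2 → l % 2 = (m : ℤ) % 2 → φ k (l : ℂ) = φ l (k : ℂ)) :
    ∃ P : ℂ[X][X], P.natDegree ≤ m ∧
      ∀ k ∈ nonnegIndices m, ∀ z : ℂ, φ k z = P.evalEval (z ^ 2 + (k : ℂ) ^ 2) ((k : ℂ) * z) := by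
  have hdec : ∀ k ∈ nonnegIndices m, ∃ e o : ℂ[X],
      ∀ z, φ k z = e.eval (z ^ 2) + z * o.eval (z ^ 2) := fun k hk => by
    obtain ⟨-, hkm, hk2⟩ := mem_nonnegIndices.1 hk
    obtain ⟨p, hp⟩ := hpoly k hkm hk2
    obtain ⟨e, o, rfl⟩ := p.exists_eq_expand_two_add_X_mul_expand_two
    exact ⟨e, o, fun z => by simp [hp, expand_eval]⟩
  choose! E O hdec using hdec
  have hpos : posIndices m ⊆ nonnegIndices m := fun k hk => by
    rw [mem_posIndices] at hk
    exact mem_nonnegIndices.2 ⟨hk.1.le, hk.2⟩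
  obtain ⟨QE, hQE, hE⟩ := exists_even_rep _ (fun k hk => (mem_nonnegIndices.1 hk).1) E
    fun k hk l hl => (even_odd_relations hdec hsym hint hk hl).1
  obtain ⟨QO, hQO, hO⟩ := exists_odd_rep _ (fun k hk => (mem_posIndices.1 hk).1) O
    fun k hk l hl => (even_odd_relations hdec hsym hint (hpos hk) (hpos hl)).2
  have hcardE : #(nonnegIndices m) ≤ m / 2 + 1 := card_image_le.trans_eq (card_range _)
  have hcardO : #(posIndices m) ≤ (m + 1) / 2 := card_image_le.trans_eq (card_range _)
  refine ⟨expand _ 2 QE + X * expand _ 2 QO, natDegree_expand_two_add_X_mul_expand_two_le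
    (hQE.trans_le (by exact_mod_cast hcardE)) (hQO.trans_le (by exact_mod_cast hcardO)), ?_⟩
  intro k hk z
  rw [hdec k hk, hE k hk, evalEval_add, evalEval_mul, evalEval_X, evalEval_expand,
    evalEval_expand, add_right_inj]
  obtain rfl | hk0 := eq_or_ne k 0
  · obtain ⟨-, h0m, h02⟩ := mem_nonnegIndices.1 hk
    have h := hsym 0 h0m h02 z
    rw [neg_zero, hdec 0 hk, hdec 0 hk, neg_sq] at h
    push_cast
    linear_combination h / 2
  · obtain ⟨hk0', hkm, hk2⟩ := mem_nonnegIndices.1 hk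
    exact hO k (mem_posIndices.2 ⟨lt_of_le_of_ne hk0' hk0.symm, hkm, hk2⟩) z

/-- `ₘPol_m` is a free `Pol(ℂ)`-module with generators `(kλ)^l`,
`l = 0, …, m` (existence part): every symmetric tuple `(φ_k)` of polynomial functions
(indexed by the integers `k` with `|k| ≤ m`, `k ≡ m (mod 2)`) satisfying
`φ_k(λ) = φ_{-k}(-λ)` and `φ_k(l) = φ_l(k)` admits a representation
`φ_k(λ) = Σ_{l=0}^{m} h_l(λ² + k²)·(kλ)^l` with `h_0, …, h_m ∈ ℂ[X]`. -/
theorem stmt_7 (m : ℕ) (φ : ℤ → ℂ → ℂ)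
    (hpoly : ∀ k : ℤ, k.natAbs ≤ m → k % 2 = (m : ℤ) % 2 →
      ∃ p : Polynomial ℂ, ∀ z : ℂ, φ k z = p.eval z)
    (hsym : ∀ k : ℤ, k.natAbs ≤ m → k % 2 = (m : ℤ) % 2 → ∀ z : ℂ, φ k z = φ (-k) (-z))
    (hint : ∀ k l : ℤ, k.natAbs ≤ m → l.natAbs ≤ m →
      k % 2 = (m : ℤ) % 2 → l % 2 = (m : ℤ) % 2 → φ k (l : ℂ) = φ l (k : ℂ)) :
    ∃ h : Fin (m + 1) → Polynomial ℂ,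
      ∀ k : ℤ, k.natAbs ≤ m → k % 2 = (m : ℤ) % 2 → ∀ z : ℂ,
        φ k z = ∑ l : Fin (m + 1),
          (h l).eval (z ^ 2 + (k : ℂ) ^ 2) * ((k : ℂ) * z) ^ (l : ℕ) := by
  obtain ⟨P, hdeg, hP⟩ := exists_bivariate_rep_nonnegIndices hpoly hsym hint
  refine ⟨fun l => P.coeff l, fun k hkm hk2 z => ?_⟩
  rw [← evalEval_eq_sum_fin (Nat.lt_succ_of_le hdeg)]
  rcases le_or_gt 0 k with hk0 | hk0
  · exact hP k (mem_nonnegIndices.2 ⟨hk0, hkm, hk2⟩) z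
  · rw [hsym k hkm hk2, hP (-k) (mem_nonnegIndices.2 ⟨by omega, by omega, by omega⟩)]
    push_cast
    ring_nf
end

section
/- Let m be a nonnegative integer and let h₀, h₁, …, h_m : ℂ → ℂ be entire functions. If Σ_{l=0}^{m} h_l(λ² + k²) · (kλ)^l = 0 for every λ ∈ ℂ and every integer k with |k| ≤ m and k ≡ m (mod 2), then h_l = 0 for every l = 0, …, m. (This is the uniqueness statement in the proof that ₘA_m is a free Hol(ℂ)-module with generators (kλ)^l.) -/
open Polynomial in
lemma stmt_8_poly_key {m : ℕ} (a : Fin (m + 1) → ℂ) (x : Fin (m + 1) → ℂ)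
    (hinj : Function.Injective x)
    (hx : ∀ i, ∑ l : Fin (m + 1), a l * (x i) ^ (l : ℕ) = 0) :
    ∀ l, a l = 0 := by
  set P : ℂ[X] := ∑ l : Fin (m + 1), C (a l) * X ^ (l : ℕ) with hP
  have hdeg : P.natDegree < m + 1 := by
    apply Nat.lt_succ_of_le
    apply Polynomial.natDegree_sum_le_of_forall_le
    intro l _
    calc (C (a l) * X ^ (l : ℕ)).natDegree ≤ (X ^ (l : ℕ) : ℂ[X]).natDegree :=
          Polynomial.natDegree_C_mul_le _ _
      _ ≤ (l : ℕ) := by simp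
      _ ≤ m := Nat.lt_succ_iff.mp l.isLt
  have heval : ∀ i, P.eval (x i) = 0 := by
    intro i; rw [hP]; simpa [Polynomial.eval_finset_sum] using hx i
  have hP0 : P = 0 :=
    P.eq_zero_of_natDegree_lt_card_of_eval_eq_zero hinj heval (by simpa using hdeg)
  intro l
  have hc := congrArg (fun p : ℂ[X] => p.coeff (l : ℕ)) hP0
  simp only [hP, Polynomial.finset_sum_coeff, Polynomial.coeff_C_mul,
    Polynomial.coeff_X_pow, Polynomial.coeff_zero, mul_ite, mul_one, mul_zero] at hc
  simp only [Fin.val_inj, Finset.sum_ite_eq, Finset.mem_univ, if_true] at hc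
  exact hc

/-- uniqueness in the freeness of `ₘA_m`: if `h_0, …, h_m : ℂ → ℂ` are
entire and `Σ_{l=0}^{m} h_l(λ² + k²)·(kλ)^l = 0` for every `λ ∈ ℂ` and every integer `k`
with `|k| ≤ m`, `k ≡ m (mod 2)`, then every `h_l` is identically zero. -/
theorem stmt_8 (m : ℕ) (h : Fin (m + 1) → ℂ → ℂ)
    (hdiff : ∀ l : Fin (m + 1), Differentiable ℂ (h l))
    (hzero : ∀ k : ℤ, k.natAbs ≤ m → k % 2 = (m : ℤ) % 2 → ∀ z : ℂ,
      ∑ l : Fin (m + 1), h l (z ^ 2 + (k : ℂ) ^ 2) * ((k : ℂ) * z) ^ (l : ℕ) = 0) :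
    ∀ l : Fin (m + 1), h l = 0 := by
  have key : ∀ s : ℂ, (∀ k₁ k₂ : ℤ, s ≠ (k₁ : ℂ) ^ 2 + (k₂ : ℂ) ^ 2) →
      ∀ l, h l s = 0 := by
    intro s hs
    set kk : Fin (m + 1) → ℤ := fun i => 2 * (i : ℤ) - m with hkk
    have hkabs : ∀ i, (kk i).natAbs ≤ m := by
      intro i; have := i.isLt; simp only [hkk]; omega
    have hkmod : ∀ i, kk i % 2 = (m : ℤ) % 2 := by
      intro i; simp only [hkk]; omega
    have hkinj : Function.Injective kk := by
      intro i j hij; simp only [hkk] at hij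
      exact Fin.ext (by omega)
    set sq : ℂ → ℂ := fun w => w ^ (((2 : ℕ) : ℂ))⁻¹ with hsq
    have hsq2 : ∀ w, (sq w) ^ 2 = w := fun w => Complex.cpow_nat_inv_pow w two_ne_zero
    set x : Fin (m + 1) → ℂ := fun i => (kk i : ℂ) * sq (s - (kk i : ℂ) ^ 2) with hx
    have hxsq : ∀ i, (x i) ^ 2 = (kk i : ℂ) ^ 2 * (s - (kk i : ℂ) ^ 2) := by
      intro i; simp only [hx, mul_pow, hsq2]
    have hinj : Function.Injective x := by
      intro i j hij
      by_contra hne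
      have hkne : kk i ≠ kk j := fun e => hne (hkinj e)
      by_cases hsqeq : (kk i) ^ 2 = (kk j) ^ 2
      · -- then kk j = -kk i, kk i ≠ 0
        have hji : kk j = -kk i := by
          have : (kk i - kk j) * (kk i + kk j) = 0 := by linear_combination hsqeq
          rcases mul_eq_zero.mp this with h1 | h1 <;> omega
        have hki0 : kk i ≠ 0 := by omega
        have hcast : ((kk j : ℂ)) ^ 2 = ((kk i : ℂ)) ^ 2 := by
          rw [hji]; push_cast; ring
        have hxj : x j = -x i := by
          simp only [hx, hcast, hji]; push_cast; ring
        have hx0 : x i = 0 := by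
          have : (2 : ℂ) * x i = 0 := by rw [two_mul]; nth_rewrite 2 [hij]; rw [hxj]; ring
          simpa using this
        have : (kk i : ℂ) ^ 2 * (s - (kk i : ℂ) ^ 2) = 0 := by
          rw [← hxsq i, hx0]; ring
        rcases mul_eq_zero.mp this with h1 | h1
        · exact hki0 (by exact_mod_cast pow_eq_zero_iff two_ne_zero |>.mp h1)
        · exact hs (kk i) 0 (by push_cast; linear_combination h1)
      · -- squares distinct
        have hc1 : ((kk i : ℂ)) ^ 2 - ((kk j : ℂ)) ^ 2 ≠ 0 := by
          intro e
          apply hsqeq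
          have : ((kk i ^ 2 : ℤ) : ℂ) = ((kk j ^ 2 : ℤ) : ℂ) := by push_cast; linear_combination e
          exact_mod_cast this
        have hc2 : s - (kk i : ℂ) ^ 2 - (kk j : ℂ) ^ 2 ≠ 0 := by
          intro e
          exact hs (kk i) (kk j) (by linear_combination e)
        have hdif : (x i) ^ 2 - (x j) ^ 2 =
            (((kk i : ℂ)) ^ 2 - ((kk j : ℂ)) ^ 2) * (s - (kk i : ℂ) ^ 2 - (kk j : ℂ) ^ 2) := by
          rw [hxsq i, hxsq j]; ring
        rw [hij, sub_self] at hdif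
        exact (mul_ne_zero hc1 hc2) hdif.symm
    have hx0 : ∀ i, ∑ l : Fin (m + 1), h l s * (x i) ^ (l : ℕ) = 0 := by
      intro i
      have hz := hzero (kk i) (hkabs i) (hkmod i) (sq (s - (kk i : ℂ) ^ 2))
      have harg : (sq (s - (kk i : ℂ) ^ 2)) ^ 2 + (kk i : ℂ) ^ 2 = s := by
        rw [hsq2]; ring
      rw [harg] at hz
      simpa only [hx] using hz
    exact stmt_8_poly_key (fun l => h l s) x hinj hx0
  intro l
  set B : Set ℂ := Set.range (fun p : ℤ × ℤ => ((p.1 : ℂ) ^ 2 + (p.2 : ℂ) ^ 2)) with hB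
  have hdense : Dense Bᶜ := (Set.countable_range _).dense_compl ℂ
  apply Continuous.ext_on hdense (hdiff l).continuous continuous_const
  intro s hsmem
  refine key s ?_ l
  intro k₁ k₂ he
  exact hsmem ⟨(k₁, k₂), he.symm⟩
end

section
/- Let m ≥ 2 be an integer and define p_m(λ, k) = ∏_{l'} (k − l')(λ − l'), where the product runs over all integers l' with |l'| ≤ m − 2 and l' ≡ m (mod 2). Then there exist polynomials p_l ∈ ℂ[X], indexed by the integers l with 0 ≤ l ≤ m − 3 and l ≡ m − 1 (mod 2), such that for all λ, k ∈ ℂ: p_m(λ, k) = (kλ)^{m−1} + Σ_l p_l(λ² + k²) · (kλ)^l. -/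
lemma aux9 (n : ℕ) : ∃ p : ℕ → Polynomial ℂ,
    p (n+1) = 1 ∧ (∀ l, n + 2 ≤ l → p l = 0) ∧ ∀ z k : ℂ,
      (∏ l' ∈ (Finset.Icc (-(n:ℤ)) (n:ℤ)).filter (fun l' => l' % 2 = (n:ℤ) % 2),
        ((k - (l' : ℂ)) * (z - (l' : ℂ)))) =
      ∑ l ∈ Finset.range (n+2),
        if l % 2 = (n+1) % 2 then (p l).eval (z^2 + k^2) * (k*z)^l else 0 := by
  induction n using Nat.strong_induction_on with
  | _ n ih =>
    match n, ih with
    | 0, _ =>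
      refine ⟨fun l => if l = 1 then 1 else 0, by simp, ?_, ?_⟩
      · intro l hl; simp; omega
      · intro z k
        have hs : (Finset.Icc (-((0:ℕ):ℤ)) ((0:ℕ):ℤ)).filter (fun l' => l' % 2 = ((0:ℕ):ℤ) % 2) = {0} := by decide
        rw [hs, Finset.prod_singleton, Finset.sum_range_succ, Finset.sum_range_one]
        norm_num
    | 1, _ =>
      refine ⟨fun l => if l = 2 then 1 else if l = 0 then 1 - Polynomial.X else 0, by simp, ?_, ?_⟩
      · intro l hl
        have h2 : l ≠ 2 := by omega
        have h0 : l ≠ 0 := by omega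
        simp [h2, h0]
      · intro z k
        have hs : (Finset.Icc (-((1:ℕ):ℤ)) ((1:ℕ):ℤ)).filter (fun l' => l' % 2 = ((1:ℕ):ℤ) % 2)
            = {-1, 1} := by decide
        rw [hs, Finset.prod_insert (by decide), Finset.prod_singleton,
          Finset.sum_range_succ, Finset.sum_range_succ, Finset.sum_range_one]
        norm_num
        push_cast
        ring
    | (n+2), ih =>
      obtain ⟨p, hp1, hp0, hp⟩ := ih n (by omega)
      set c : ℂ := ((n:ℂ) + 2) with hc
      refine ⟨fun l => (if 2 ≤ l then p (l-2) else 0)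
          + (Polynomial.C (c^4) - Polynomial.C (c^2) * Polynomial.X) * p l, ?_, ?_, ?_⟩
      · have : p (n+3) = 0 := hp0 _ (by omega)
        simp [this, hp1]
      · intro l hl
        have h1 : p (l-2) = 0 := hp0 _ (by omega)
        have h2 : p l = 0 := hp0 _ (by omega)
        simp [h1, h2]
      · intro z k
        have hset : (Finset.Icc (-((n:ℤ)+2)) ((n:ℤ)+2)).filter (fun l' => l' % 2 = ((n:ℤ)+2) % 2)
            = insert (-((n:ℤ)+2)) (insert ((n:ℤ)+2)
                ((Finset.Icc (-(n:ℤ)) (n:ℤ)).filter (fun l' => l' % 2 = (n:ℤ) % 2))) := by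
          ext x
          simp only [Finset.mem_insert, Finset.mem_filter, Finset.mem_Icc]
          omega
        have hmem1 : (-((n:ℤ)+2)) ∉ insert ((n:ℤ)+2)
            ((Finset.Icc (-(n:ℤ)) (n:ℤ)).filter (fun l' => l' % 2 = (n:ℤ) % 2)) := by
          simp only [Finset.mem_insert, Finset.mem_filter, Finset.mem_Icc]
          omega
        have hmem2 : ((n:ℤ)+2) ∉ (Finset.Icc (-(n:ℤ)) (n:ℤ)).filter (fun l' => l' % 2 = (n:ℤ) % 2) := by
          simp only [Finset.mem_filter, Finset.mem_Icc]
          omega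
        push_cast
        rw [hset, Finset.prod_insert hmem1, Finset.prod_insert hmem2, hp z k]
        set y := z^2 + k^2 with hy
        set x := k*z with hx
        set S := ∑ l ∈ Finset.range (n+2),
          if l % 2 = (n+1) % 2 then (p l).eval y * x^l else 0 with hS
        have hpar : (n + 2 + 1) % 2 = (n+1) % 2 := by omega
        -- RHS computation
        have key : ∑ l ∈ Finset.range (n+2+2),
            (if l % 2 = (n+2+1) % 2 then
              ((if 2 ≤ l then p (l-2) else 0)
                + (Polynomial.C (c^4) - Polynomial.C (c^2) * Polynomial.X) * p l).eval y * x^l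
              else 0)
            = x^2 * S + (c^4 - c^2*y) * S := by
          have split : ∀ l ∈ Finset.range (n+4),
              (if l % 2 = (n+2+1) % 2 then
                ((if 2 ≤ l then p (l-2) else 0)
                  + (Polynomial.C (c^4) - Polynomial.C (c^2) * Polynomial.X) * p l).eval y * x^l
                else 0)
              = (if l % 2 = (n+1) % 2 then (if 2 ≤ l then p (l-2) else 0).eval y * x^l else 0)
                + (if l % 2 = (n+1) % 2 then (c^4 - c^2*y) * ((p l).eval y * x^l) else 0) := by
            intro l _
            simp only [hpar]
            split
            · simp [Polynomial.eval_add, Polynomial.eval_mul]; ring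
            · simp
          rw [show n+2+2 = n+4 from rfl, Finset.sum_congr rfl split, Finset.sum_add_distrib]
          have hA : ∑ l ∈ Finset.range (n+4),
              (if l % 2 = (n+1) % 2 then (if 2 ≤ l then p (l-2) else 0).eval y * x^l else 0)
              = x^2 * S := by
            rw [show n+4 = (n+3)+1 from rfl, Finset.sum_range_succ']
            rw [show n+3 = (n+2)+1 from rfl, Finset.sum_range_succ']
            have e0 : (if (0:ℕ) % 2 = (n+1) % 2 then
                (if 2 ≤ (0:ℕ) then p (0-2) else 0).eval y * x^0 else 0) = 0 := by
              norm_num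
            have e1 : (if (0+1:ℕ) % 2 = (n+1) % 2 then
                (if 2 ≤ (0+1:ℕ) then p (0+1-2) else 0).eval y * x^(0+1) else 0) = 0 := by
              norm_num
            rw [e0, e1, add_zero, add_zero, hS, Finset.mul_sum]
            apply Finset.sum_congr rfl
            intro l _
            simp only [show (l+1+1) % 2 = l % 2 from by omega]
            split
            · rw [if_pos (by omega : 2 ≤ l+1+1), show l+1+1-2 = l from by omega]
              ring
            · ring
          have hB : ∑ l ∈ Finset.range (n+4),
              (if l % 2 = (n+1) % 2 then (c^4 - c^2*y) * ((p l).eval y * x^l) else 0)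
              = (c^4 - c^2*y) * S := by
            rw [show n+4 = (n+3)+1 from rfl, Finset.sum_range_succ]
            rw [show n+3 = (n+2)+1 from rfl, Finset.sum_range_succ]
            have e3 : (if (n+3) % 2 = (n+1) % 2 then
                (c^4 - c^2*y) * ((p (n+3)).eval y * x^(n+3)) else 0) = 0 := by
              rw [hp0 _ (by omega)]; simp
            have e2 : (if (n+2) % 2 = (n+1) % 2 then
                (c^4 - c^2*y) * ((p (n+2)).eval y * x^(n+2)) else 0) = 0 := by
              rw [if_neg (by omega)]
            rw [e3, e2, add_zero, add_zero, hS, Finset.mul_sum]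
            apply Finset.sum_congr rfl
            intro l _
            split
            · rfl
            · ring
          rw [hA, hB]
        rw [key]
        have harith : (k - (-((n:ℤ)+2) : ℤ)) * (z - (-((n:ℤ)+2) : ℤ))
            * ((k - (((n:ℤ)+2 : ℤ)) ) * (z - (((n:ℤ)+2 : ℤ)))) * S
            = x^2 * S + (c^4 - c^2*y) * S := by
          push_cast
          rw [hc, hy, hx]
          ring
        rw [← harith]
        ring

/-- for `m ≥ 2` and
`p_m(λ,k) = ∏_{|l'| ≤ m-2, l' ≡ m (mod 2)} (k - l')(λ - l')`, there exist polynomials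
`p_l ∈ ℂ[X]` (for `0 ≤ l ≤ m-3`, `l ≡ m-1 (mod 2)`) with
`p_m(λ,k) = (kλ)^{m-1} + Σ_l p_l(λ² + k²)·(kλ)^l`. -/
theorem stmt_9 (m : ℕ) (hm : 2 ≤ m) :
    ∃ p : ℕ → Polynomial ℂ,
      ∀ z k : ℂ,
        (∏ l' ∈ (Finset.Icc (-((m : ℤ) - 2)) ((m : ℤ) - 2)).filter
            (fun l' => l' % 2 = (m : ℤ) % 2),
          ((k - (l' : ℂ)) * (z - (l' : ℂ)))) =
        (k * z) ^ (m - 1) +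
          ∑ l ∈ (Finset.range (m - 2)).filter (fun l => l % 2 = (m - 1) % 2),
            (p l).eval (z ^ 2 + k ^ 2) * (k * z) ^ l := by
  obtain ⟨n, rfl⟩ : ∃ n, m = n + 2 := ⟨m - 2, by omega⟩
  obtain ⟨p, hp1, hp0, hp⟩ := aux9 n
  refine ⟨p, ?_⟩
  intro z k
  have hset : (Finset.Icc (-(((n+2:ℕ) : ℤ) - 2)) (((n+2:ℕ) : ℤ) - 2)).filter
      (fun l' => l' % 2 = ((n+2:ℕ) : ℤ) % 2)
      = (Finset.Icc (-(n:ℤ)) (n:ℤ)).filter (fun l' => l' % 2 = (n:ℤ) % 2) := by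
    ext x
    simp only [Finset.mem_filter, Finset.mem_Icc]
    push_cast
    omega
  rw [hset, hp z k]
  rw [Finset.sum_range_succ, Finset.sum_range_succ]
  rw [if_pos rfl, if_neg (by omega : ¬ n % 2 = (n+1) % 2), hp1]
  have hm1 : n + 2 - 1 = n + 1 := by omega
  have hm2 : n + 2 - 2 = n := by omega
  rw [hm1, hm2]
  rw [Finset.sum_filter]
  simp only [Polynomial.eval_one, one_mul]
  ring
end

section
/- Let m ≤ n be nonnegative integers with m ≡ n (mod 2). Suppose that for each integer k with |k| ≤ m and k ≡ m (mod 2) we are given an entire function h_k : ℂ → ℂ, and that these satisfy h_k(λ) = h_{−k}(−λ) for all such k and all λ ∈ ℂ, and h_k(l) = h_l(k) for all integers k, l with |k|, |l| ≤ m and k ≡ l ≡ m (mod 2). Then there exist entire functions h̃_k : ℂ → ℂ for all integers k with |k| ≤ n and k ≡ n (mod 2), such that h̃_k = h_k for all |k| ≤ m, and such that h̃_k(λ) = h̃_{−k}(−λ) for all such k and all λ ∈ ℂ, and h̃_k(l) = h̃_l(k) for all integers k, l with |k|, |l| ≤ n and k ≡ l ≡ n (mod 2). (This extension is constructed by Lagrange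 interpolation in the proof of the Level-3 intertwining theorem for SL(2,ℂ).) -/
/-!
Lagrange interpolation at the level-`m` nodes `s`, with basis `ℓ_j`. The blending
`h̃_k(z) = ∑ ℓ_j(k) h_j(z) + ∑ ℓ_j(z) h_j(k) - ∑ ℓ_i(k) ℓ_j(z) h_i(j)` of the interpolants in
the two variables is entire in `z`. For `k ∈ s` it equals `h_k`, since `ℓ_i(k) = δ_ik` and
`h_k(j) = h_j(k)` on `s × s`. Exchanging `k` and `z = l` swaps the first two terms and fixes the
third, again by `h_i(j) = h_j(i)`. Finally `s = -s` gives `ℓ_{-j}(-w) = ℓ_j(w)`, so reindexing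
by `j ↦ -j` and `h_j(w) = h_{-j}(-w)` make `h̃` invariant under `(k, z) ↦ (-k, -z)`.
-/

open Finset Polynomial

noncomputable def intLagrange (s : Finset ℤ) (j : ℤ) (w : ℂ) : ℂ :=
  (Lagrange.basis s (Int.cast : ℤ → ℂ) j).eval w

section IntLagrange

variable {s : Finset ℤ}

theorem differentiable_intLagrange (s : Finset ℤ) (j : ℤ) : Differentiable ℂ (intLagrange s j) :=
  Polynomial.differentiable _

theorem intLagrange_self {j : ℤ} (hj : j ∈ s) : intLagrange s j j = 1 :=
  Lagrange.eval_basis_self Int.cast_injective.injOn hj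

theorem intLagrange_of_ne {i j : ℤ} (hj : j ∈ s) (hij : i ≠ j) : intLagrange s i j = 0 :=
  Lagrange.eval_basis_of_ne hij hj

theorem sum_intLagrange_mul {k : ℤ} (hk : k ∈ s) (f : ℤ → ℂ) :
    ∑ j ∈ s, intLagrange s j k * f j = f k := by
  rw [sum_eq_single_of_mem k hk fun j _ hjk => by rw [intLagrange_of_ne hk hjk, zero_mul],
    intLagrange_self hk, one_mul]

theorem sum_comp_neg_of_neg_mem (hs : ∀ i ∈ s, -i ∈ s) {M : Type*} [AddCommMonoid M]
    (f : ℤ → M) : ∑ j ∈ s, f (-j) = ∑ j ∈ s, f j :=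
  sum_nbij' Neg.neg Neg.neg hs hs (fun _ _ => neg_neg _) (fun _ _ => neg_neg _) fun _ _ => rfl

theorem intLagrange_neg_neg (hs : ∀ i ∈ s, -i ∈ s) (j : ℤ) (w : ℂ) :
    intLagrange s (-j) (-w) = intLagrange s j w := by
  simp only [intLagrange, Lagrange.basis, Lagrange.basisDivisor, eval_prod, eval_mul, eval_C,
    eval_sub, eval_X]
  refine prod_nbij' Neg.neg Neg.neg ?_ ?_ (fun _ _ => neg_neg _) (fun _ _ => neg_neg _) ?_
  · intro i hi
    simp only [mem_erase] at hi ⊢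
    exact ⟨fun h => hi.1 (by rw [← h, neg_neg]), hs i hi.2⟩
  · intro i hi
    simp only [mem_erase] at hi ⊢
    exact ⟨neg_injective.ne hi.1, hs i hi.2⟩
  · intro i _
    push_cast
    rw [sub_neg_eq_add, sub_neg_eq_add, ← neg_add', ← neg_add', inv_neg, neg_mul_neg]

end IntLagrange

noncomputable def levelSet (m : ℕ) : Finset ℤ :=
  {k ∈ Icc (-(m : ℤ)) m | k % 2 = (m : ℤ) % 2}

theorem mem_levelSet {m : ℕ} {k : ℤ} : k ∈ levelSet m ↔ k.natAbs ≤ m ∧ k % 2 = (m : ℤ) % 2 := by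
  simp only [levelSet, mem_filter, mem_Icc]
  omega

theorem neg_mem_levelSet {m : ℕ} {k : ℤ} (hk : k ∈ levelSet m) : -k ∈ levelSet m := by
  rw [mem_levelSet] at hk ⊢
  omega

noncomputable def symmetricExtension (s : Finset ℤ) (h : ℤ → ℂ → ℂ) (k : ℤ) (z : ℂ) : ℂ :=
  ∑ j ∈ s, intLagrange s j k * h j z + ∑ j ∈ s, intLagrange s j z * h j k
    - ∑ i ∈ s, ∑ j ∈ s, intLagrange s i k * intLagrange s j z * h i j

section SymmetricExtension

variable {s : Finset ℤ} {h : ℤ → ℂ → ℂ}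

theorem differentiable_symmetricExtension (hdiff : ∀ j ∈ s, Differentiable ℂ (h j)) (k : ℤ) :
    Differentiable ℂ (symmetricExtension s h k) := by
  unfold symmetricExtension
  refine ((Differentiable.fun_sum fun j hj => (hdiff j hj).const_mul _).add
    (Differentiable.fun_sum fun j _ => (differentiable_intLagrange s j).mul_const _)).sub
    (Differentiable.fun_sum fun i _ => Differentiable.fun_sum fun j _ => ?_)
  exact ((differentiable_intLagrange s j).const_mul _).mul_const _

theorem symmetricExtension_of_mem (hint : ∀ i ∈ s, ∀ j ∈ s, h i j = h j i) {k : ℤ} (hk : k ∈ s) :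
    symmetricExtension s h k = h k := by
  funext z
  have hP₂ : ∑ j ∈ s, intLagrange s j z * h j k = ∑ j ∈ s, intLagrange s j z * h k j :=
    sum_congr rfl fun j hj => by rw [hint j hj k hk]
  have hP₁P₂ : ∑ i ∈ s, ∑ j ∈ s, intLagrange s i k * intLagrange s j z * h i j
      = ∑ j ∈ s, intLagrange s j z * h k j := by
    simp_rw [mul_assoc, ← mul_sum]
    exact sum_intLagrange_mul hk fun i => ∑ j ∈ s, intLagrange s j z * h i j
  rw [symmetricExtension, sum_intLagrange_mul hk, hP₂, hP₁P₂, add_sub_cancel_right]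

theorem symmetricExtension_neg_neg (hs : ∀ i ∈ s, -i ∈ s)
    (hsym : ∀ j ∈ s, ∀ z, h j z = h (-j) (-z)) (k : ℤ) (z : ℂ) :
    symmetricExtension s h (-k) (-z) = symmetricExtension s h k z := by
  simp only [symmetricExtension, Int.cast_neg]
  congr 1
  congr 1
  · rw [← sum_comp_neg_of_neg_mem hs]
    exact sum_congr rfl fun j hj => by rw [intLagrange_neg_neg hs, ← hsym j hj]
  · rw [← sum_comp_neg_of_neg_mem hs]
    exact sum_congr rfl fun j hj => by rw [intLagrange_neg_neg hs, ← hsym j hj]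
  · rw [← sum_comp_neg_of_neg_mem hs]
    refine sum_congr rfl fun i hi => ?_
    rw [← sum_comp_neg_of_neg_mem hs]
    exact sum_congr rfl fun j _ => by
      rw [intLagrange_neg_neg hs, intLagrange_neg_neg hs, Int.cast_neg, ← hsym i hi]

theorem symmetricExtension_swap (hint : ∀ i ∈ s, ∀ j ∈ s, h i j = h j i) (k l : ℤ) :
    symmetricExtension s h k l = symmetricExtension s h l k := by
  have hP₁P₂ : ∑ i ∈ s, ∑ j ∈ s, intLagrange s i k * intLagrange s j l * h i j
      = ∑ i ∈ s, ∑ j ∈ s, intLagrange s i l * intLagrange s j k * h i j := by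
    rw [sum_comm]
    exact sum_congr rfl fun i hi => sum_congr rfl fun j hj => by
      rw [hint j hj i hi, mul_comm (intLagrange s j k)]
  rw [symmetricExtension, symmetricExtension, hP₁P₂, add_comm]

end SymmetricExtension

theorem stmt_10_general (m n : ℕ)
    (h : ℤ → ℂ → ℂ)
    (hdiff : ∀ k : ℤ, k.natAbs ≤ m → k % 2 = (m : ℤ) % 2 → Differentiable ℂ (h k))
    (hsym : ∀ k : ℤ, k.natAbs ≤ m → k % 2 = (m : ℤ) % 2 → ∀ z : ℂ, h k z = h (-k) (-z))
    (hint : ∀ k l : ℤ, k.natAbs ≤ m → l.natAbs ≤ m →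
      k % 2 = (m : ℤ) % 2 → l % 2 = (m : ℤ) % 2 → h k (l : ℂ) = h l (k : ℂ)) :
    ∃ ht : ℤ → ℂ → ℂ,
      (∀ k : ℤ, k.natAbs ≤ n → k % 2 = (n : ℤ) % 2 → Differentiable ℂ (ht k)) ∧
      (∀ k : ℤ, k.natAbs ≤ m → k % 2 = (m : ℤ) % 2 → ht k = h k) ∧
      (∀ k : ℤ, k.natAbs ≤ n → k % 2 = (n : ℤ) % 2 → ∀ z : ℂ, ht k z = ht (-k) (-z)) ∧
      (∀ k l : ℤ, k.natAbs ≤ n → l.natAbs ≤ n →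
        k % 2 = (n : ℤ) % 2 → l % 2 = (n : ℤ) % 2 → ht k (l : ℂ) = ht l (k : ℂ)) := by
  have hmem {k : ℤ} (hk : k ∈ levelSet m) := mem_levelSet.1 hk
  have hint' : ∀ i ∈ levelSet m, ∀ j ∈ levelSet m, h i j = h j i := fun i hi j hj =>
    hint i j (hmem hi).1 (hmem hj).1 (hmem hi).2 (hmem hj).2
  refine ⟨symmetricExtension (levelSet m) h,
    fun k _ _ => differentiable_symmetricExtension (fun j hj => hdiff j (hmem hj).1 (hmem hj).2) k,
    fun k hk hk' => symmetricExtension_of_mem hint' (mem_levelSet.2 ⟨hk, hk'⟩),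
    fun k _ _ z => (symmetricExtension_neg_neg (fun _ => neg_mem_levelSet)
      (fun j hj => hsym j (hmem hj).1 (hmem hj).2) k z).symm,
    fun k l _ _ _ _ => symmetricExtension_swap hint' k l⟩

/-- every symmetric tuple of entire functions at level `m` (i.e. an element
of `ₘA_m`, indexed by the integers `k` with `|k| ≤ m`, `k ≡ m (mod 2)`) extends to a
symmetric tuple of entire functions at level `n`, whenever `m ≤ n` and `m ≡ n (mod 2)`. -/
theorem stmt_10 (m n : ℕ) (hmn : m ≤ n) (hpar : m % 2 = n % 2)
    (h : ℤ → ℂ → ℂ)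
    (hdiff : ∀ k : ℤ, k.natAbs ≤ m → k % 2 = (m : ℤ) % 2 → Differentiable ℂ (h k))
    (hsym : ∀ k : ℤ, k.natAbs ≤ m → k % 2 = (m : ℤ) % 2 → ∀ z : ℂ, h k z = h (-k) (-z))
    (hint : ∀ k l : ℤ, k.natAbs ≤ m → l.natAbs ≤ m →
      k % 2 = (m : ℤ) % 2 → l % 2 = (m : ℤ) % 2 → h k (l : ℂ) = h l (k : ℂ)) :
    ∃ ht : ℤ → ℂ → ℂ,
      (∀ k : ℤ, k.natAbs ≤ n → k % 2 = (n : ℤ) % 2 → Differentiable ℂ (ht k)) ∧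
      (∀ k : ℤ, k.natAbs ≤ m → k % 2 = (m : ℤ) % 2 → ht k = h k) ∧
      (∀ k : ℤ, k.natAbs ≤ n → k % 2 = (n : ℤ) % 2 → ∀ z : ℂ, ht k z = ht (-k) (-z)) ∧
      (∀ k l : ℤ, k.natAbs ≤ n → l.natAbs ≤ n →
        k % 2 = (n : ℤ) % 2 → l % 2 = (n : ℤ) % 2 → ht k (l : ℂ) = ht l (k : ℂ)) :=
  stmt_10_general m n h hdiff hsym hint
end

section
/- Let m be a nonnegative integer and let (φ_k) be a tuple of complex polynomial functions indexed by the integers k with |k| ≤ m, k ≡ m (mod 2), satisfying φ_k(λ) = φ_{−k}(−λ) for all k, λ and φ_k(l) = φ_l(k) for all indices k, l. Then there exists a polynomial P ∈ ℂ[X, Y] in two variables such that φ_k(λ) = P(λ² + k², kλ) for all indices k and all λ ∈ ℂ. (In other words, the two elements (λ, k) ↦ λ² + k² and (λ, k) ↦ kλ generate the algebra ₘPol_m as a ℂ-algebra.) -/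
/-!
The negative indices are determined by the nonnegative ones through `φ_{-k}(λ) = φ_k(-λ)`, so
it suffices to match `φ_c` for the indices `c ≥ 0`, which we do from the largest to the smallest.
If `P` already matches `φ_k` for all indices `k > c`, then the defect `D = φ_c - P(λ² + c², cλ)`
vanishes at `λ = ±k` for these `k`: this is the interpolation condition `φ_c(k) = φ_k(c)`
combined with the symmetry of `(λ, k) ↦ (λ² + k², kλ)` in `λ` and `k`. Hence
`D = ∏ (λ² - k²) · G`. The polynomial `y² - k² x + k⁴` vanishes along the index `k` and becomes
`(c² - k²)(λ² - k²)` along the index `c`; and every polynomial in `λ` (an even one if `c = 0`)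
is a polynomial in `λ² + c²` and `cλ`. This produces a correction of `P` that matches `φ_c`
without disturbing the larger indices.
-/

open Polynomial

section CommRing

variable {R : Type*} [CommRing R]

/-- `curveEval k P` is the polynomial `λ ↦ P(λ² + k², kλ)`, the `k`-th component of `P`. -/
noncomputable def curveEval (k : R) : MvPolynomial (Fin 2) R →ₐ[R] R[X] :=
  MvPolynomial.aeval ![X ^ 2 + C (k ^ 2), C k * X]

theorem eval_curveEval (a z : R) (P : MvPolynomial (Fin 2) R) :
    (curveEval a P).eval z = MvPolynomial.eval ![z ^ 2 + a ^ 2, a * z] P := by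
  rw [curveEval, ← coe_aeval_eq_eval, ← AlgHom.comp_apply, MvPolynomial.comp_aeval,
    MvPolynomial.aeval_eq_eval]
  congr 2
  funext i
  fin_cases i <;> simp

theorem eval_curveEval_comm (a b : R) (P : MvPolynomial (Fin 2) R) :
    (curveEval a P).eval b = (curveEval b P).eval a := by
  rw [eval_curveEval, eval_curveEval]
  congr 2
  funext i
  fin_cases i <;> simp <;> ring

theorem curveEval_neg (a : R) (P : MvPolynomial (Fin 2) R) :
    curveEval (-a) P = (curveEval a P).comp (-X) := by
  rw [curveEval, curveEval, comp_eq_aeval, ← AlgHom.comp_apply, MvPolynomial.comp_aeval]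
  congr 2
  funext i
  fin_cases i <;> simp

noncomputable def vanishingFactor (k : R) : MvPolynomial (Fin 2) R :=
  MvPolynomial.X 1 ^ 2 - MvPolynomial.C (k ^ 2) * MvPolynomial.X 0 + MvPolynomial.C (k ^ 4)

theorem curveEval_vanishingFactor (a k : R) :
    curveEval a (vanishingFactor k) = C (a ^ 2 - k ^ 2) * (X ^ 2 - C (k ^ 2)) := by
  simp only [curveEval, vanishingFactor, map_add, map_sub, map_mul, map_pow, MvPolynomial.aeval_X,
    MvPolynomial.aeval_C, algebraMap_eq, Matrix.cons_val_zero, Matrix.cons_val_one]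
  ring

theorem isCoprime_X_sq_sub_C_of_isUnit_sub {a b : R} (h : IsUnit (a - b)) :
    IsCoprime (X ^ 2 - C a) (X ^ 2 - C b) := by
  simpa only [map_sub, expand_X, expand_C] using
    (isCoprime_expand two_ne_zero).mpr (isCoprime_X_sub_C_of_isUnit_sub h)

theorem exists_expand_two_eq_of_comp_neg_X_eq [NoZeroDivisors R] [CharZero R] {g : R[X]}
    (hg : g.comp (-X) = g) : ∃ h : R[X], expand R 2 h = g := by
  refine ⟨contract 2 g, ?_⟩
  ext n
  rw [coeff_expand two_pos, coeff_contract two_ne_zero]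
  split_ifs with hn
  · rw [Nat.div_mul_cancel hn]
  · have hcoeff := congr_arg (coeff · n) hg
    rw [← neg_one_mul (X : R[X]), ← C_1, ← C_neg] at hcoeff
    simp only [comp_C_mul_X_coeff, (Nat.odd_iff.mpr (Nat.two_dvd_ne_zero.mp hn)).neg_one_pow,
      mul_neg_one] at hcoeff
    exact (CharZero.neg_eq_self_iff.mp hcoeff).symm

end CommRing

section Field

variable {K : Type*} [Field K] [CharZero K]

theorem exists_curveEval_eq {c : K} {g : K[X]} (hg : c = 0 → g.comp (-X) = g) :
    ∃ Q, curveEval c Q = g := by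
  rcases eq_or_ne c 0 with rfl | hc
  · obtain ⟨h, rfl⟩ := exists_expand_two_eq_of_comp_neg_X_eq (hg rfl)
    refine ⟨aeval (MvPolynomial.X 0) h, ?_⟩
    rw [← aeval_algHom_apply]
    simp [curveEval, expand_eq_comp_X_pow, comp_eq_aeval]
  · refine ⟨aeval (MvPolynomial.C c⁻¹ * MvPolynomial.X 1) g, ?_⟩
    rw [← aeval_algHom_apply]
    simp only [curveEval, map_mul, MvPolynomial.aeval_C, MvPolynomial.aeval_X, algebraMap_eq,
      Matrix.cons_val_one, Matrix.cons_val_zero]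
    rw [← mul_assoc, ← C_mul, inv_mul_cancel₀ hc, C_1, one_mul, aeval_X_left_apply]

theorem X_sq_sub_C_sq_dvd {a : K} (ha : a ≠ 0) {D : K[X]} (h₁ : D.IsRoot a)
    (h₂ : D.IsRoot (-a)) : X ^ 2 - C (a ^ 2) ∣ D := by
  have hunit : IsUnit (a - -a) := by
    rw [sub_neg_eq_add]
    exact isUnit_iff_ne_zero.mpr (add_self_eq_zero.not.mpr ha)
  convert (isCoprime_X_sub_C_of_isUnit_sub hunit).mul_dvd (dvd_iff_isRoot.mpr h₁)
    (dvd_iff_isRoot.mpr h₂) using 1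
  simp only [C_neg, C_pow]
  ring

theorem prod_X_sq_sub_C_sq_dvd {t : Finset K} (ht₀ : ∀ k ∈ t, k ≠ 0)
    (ht : Set.InjOn (· ^ 2) (t : Set K)) {D : K[X]}
    (hD : ∀ k ∈ t, D.IsRoot k ∧ D.IsRoot (-k)) : ∏ k ∈ t, (X ^ 2 - C (k ^ 2)) ∣ D :=
  Finset.prod_dvd_of_coprime
    (fun _ ha _ hb hab =>
      isCoprime_X_sq_sub_C_of_isUnit_sub (sub_ne_zero.mpr (ht.ne ha hb hab)).isUnit)
    (fun k hk => X_sq_sub_C_sq_dvd (ht₀ k hk) (hD k hk).1 (hD k hk).2)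

theorem exists_curveEval_eq_prod_mul {c : K} {t : Finset K} (hct : ∀ k ∈ t, c ^ 2 ≠ k ^ 2)
    {G : K[X]} (hG : c = 0 → G.comp (-X) = G) :
    ∃ Q, curveEval c Q = (∏ k ∈ t, (X ^ 2 - C (k ^ 2))) * G ∧ ∀ k ∈ t, curveEval k Q = 0 := by
  set κ := ∏ k ∈ t, (c ^ 2 - k ^ 2)
  have hκ : κ ≠ 0 := Finset.prod_ne_zero_iff.mpr fun k hk => sub_ne_zero.mpr (hct k hk)
  obtain ⟨Q₀, hQ₀⟩ := exists_curveEval_eq (g := C κ⁻¹ * G) fun hc => by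
    rw [mul_comp, C_comp, hG hc]
  refine ⟨Q₀ * ∏ k ∈ t, vanishingFactor k, ?_, fun k hk => ?_⟩
  · have hκκ : C κ⁻¹ * C κ = (1 : K[X]) := by rw [← C_mul, inv_mul_cancel₀ hκ, C_1]
    rw [map_mul, map_prod, hQ₀]
    simp only [curveEval_vanishingFactor, Finset.prod_mul_distrib, ← map_prod]
    linear_combination ((∏ k ∈ t, (X ^ 2 - C (k ^ 2))) * G) * hκκ
  · have hk₀ : curveEval k (vanishingFactor k) = 0 := by
      rw [curveEval_vanishingFactor, sub_self, C_0, zero_mul]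
    rw [map_mul, map_prod, Finset.prod_eq_zero hk hk₀, mul_zero]

theorem exists_curveEval_eq_of_isRoot {c : K} {T : Finset K} (hT₀ : ∀ k ∈ T, k ≠ 0)
    (hT : Set.InjOn (· ^ 2) (T : Set K)) (hcT : ∀ k ∈ T, c ^ 2 ≠ k ^ 2) {D : K[X]}
    (hD : ∀ k ∈ T, D.IsRoot k ∧ D.IsRoot (-k)) (hDeven : c = 0 → D.comp (-X) = D) :
    ∃ Q, curveEval c Q = D ∧ ∀ k ∈ T, curveEval k Q = 0 := by
  obtain ⟨G, rfl⟩ := prod_X_sq_sub_C_sq_dvd hT₀ hT hD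
  set M := ∏ k ∈ T, (X ^ 2 - C (k ^ 2))
  have hM₀ : M ≠ 0 := Finset.prod_ne_zero_iff.mpr fun k _ => X_pow_sub_C_ne_zero two_pos _
  have hM : M.comp (-X) = M := by simp [M, prod_comp]
  have hGeven : c = 0 → G.comp (-X) = G := fun hc =>
    mul_left_cancel₀ hM₀ (by rw [← hDeven hc, mul_comp, hM])
  exact exists_curveEval_eq_prod_mul hcT hGeven

theorem exists_curveEval_eq_of_interpolation (f : ℕ → K[X]) (s : Finset ℕ)
    (hint : ∀ c ∈ s, ∀ k ∈ s, (f c).eval (k : K) = (f k).eval (c : K))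
    (hint_neg : ∀ c ∈ s, ∀ k ∈ s, (f c).eval (-k : K) = (f k).eval (-c : K))
    (heven : 0 ∈ s → (f 0).comp (-X) = f 0) :
    ∃ P, ∀ c ∈ s, curveEval (c : K) P = f c := by
  -- Indices are added from the largest down; this keeps `0` out of `t`, so `±k` are distinct.
  induction s using Finset.induction_on_min with
  | empty => exact ⟨0, by simp⟩
  | insert c t hct ih =>
    have hc : c ∈ insert c t := Finset.mem_insert_self c t
    have ht : ∀ k ∈ t, k ∈ insert c t := fun k => Finset.mem_insert_of_mem
    obtain ⟨P', hP'⟩ := ih (fun a ha b hb => hint a (ht a ha) b (ht b hb))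
      (fun a ha b hb => hint_neg a (ht a ha) b (ht b hb)) (fun h0 => heven (ht 0 h0))
    have hsq : ∀ a b : ℕ, (a : K) ^ 2 = (b : K) ^ 2 → a = b := fun a b h =>
      Nat.pow_left_injective two_ne_zero (by exact_mod_cast h)
    set T := t.map (Nat.castEmbedding : ℕ ↪ K)
    have hT₀ : ∀ k ∈ T, k ≠ 0 := by
      simpa [T] using fun k hk => ((Nat.zero_le c).trans_lt (hct k hk)).ne'
    have hT : Set.InjOn (· ^ 2) (T : Set K) := by
      rw [Finset.coe_map]
      rintro _ ⟨a, -, rfl⟩ _ ⟨b, -, rfl⟩ hab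
      exact congrArg _ (hsq a b hab)
    have hcT : ∀ k ∈ T, (c : K) ^ 2 ≠ k ^ 2 := by
      simpa [T] using fun k hk h => (hct k hk).ne (hsq c k h)
    set D := f c - curveEval (c : K) P' with hD_def
    have hD : ∀ k ∈ T, D.IsRoot k ∧ D.IsRoot (-k) := by
      simp only [T, hD_def, Finset.forall_mem_map, Nat.castEmbedding_apply, IsRoot, eval_sub,
        sub_eq_zero]
      intro k hk
      constructor
      · rw [hint c hc k (ht k hk), eval_curveEval_comm, hP' k hk]
      · rw [hint_neg c hc k (ht k hk), eval_curveEval_comm, curveEval_neg, eval_comp, eval_neg,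
          eval_X, hP' k hk]
    have hDeven : (c : K) = 0 → D.comp (-X) = D := by
      intro h
      obtain rfl : c = 0 := by exact_mod_cast h
      rw [hD_def, sub_comp, heven hc, ← curveEval_neg, h, neg_zero]
    obtain ⟨Q, hQc, hQT⟩ := exists_curveEval_eq_of_isRoot hT₀ hT hcT hD hDeven
    refine ⟨P' + Q, (Finset.forall_mem_insert _ _ _).mpr ⟨?_, fun k hk => ?_⟩⟩
    · rw [map_add, hQc, hD_def, add_sub_cancel]
    · rw [map_add, hP' k hk, hQT k (Finset.mem_map_of_mem _ hk), add_zero]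

theorem exists_curveEval_eq_of_neg_mem (S : Finset ℤ) (hS : ∀ k ∈ S, -k ∈ S) (f : ℤ → K[X])
    (hsym : ∀ k ∈ S, f (-k) = (f k).comp (-X))
    (hint : ∀ k ∈ S, ∀ l ∈ S, (f k).eval (l : K) = (f l).eval (k : K)) :
    ∃ P, ∀ k ∈ S, curveEval (k : K) P = f k := by
  classical
  have hmem : ∀ c : ℕ, c ∈ S.image Int.natAbs ↔ (c : ℤ) ∈ S := fun c => by
    refine ⟨fun hc => ?_, fun hc => Finset.mem_image.mpr ⟨c, hc, Int.natAbs_natCast c⟩⟩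
    obtain ⟨k, hk, rfl⟩ := Finset.mem_image.mp hc
    rcases Int.natAbs_eq k with h | h <;> rw [h] at hk
    · exact hk
    · simpa using hS _ hk
  obtain ⟨P, hP⟩ := exists_curveEval_eq_of_interpolation (fun c : ℕ => f c) (S.image Int.natAbs)
    (fun c hc k hk => by simpa using hint c ((hmem c).mp hc) k ((hmem k).mp hk))
    (fun c hc k hk => by
      have h := hint (-c) (hS c ((hmem c).mp hc)) k ((hmem k).mp hk)
      rw [hsym c ((hmem c).mp hc), eval_comp] at h
      simpa using h)
    (fun h0 => by simpa using (hsym 0 ((hmem 0).mp h0)).symm)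
  refine ⟨P, fun k hk => ?_⟩
  obtain ⟨c, rfl | rfl⟩ : ∃ c : ℕ, k = c ∨ k = -c := ⟨k.natAbs, Int.natAbs_eq k⟩
  · simpa using hP c ((hmem c).mpr hk)
  · have hc : (c : ℤ) ∈ S := by simpa using hS _ hk
    rw [Int.cast_neg, Int.cast_natCast, curveEval_neg, hsym c hc, hP c ((hmem c).mpr hc)]

end Field

/-- the two elements `(λ,k) ↦ λ² + k²` and `(λ,k) ↦ kλ` generate the
algebra `ₘPol_m` as a `ℂ`-algebra: every symmetric tuple `(φ_k)` of polynomial functions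
(indexed by the integers `k` with `|k| ≤ m`, `k ≡ m (mod 2)`) satisfying
`φ_k(λ) = φ_{-k}(-λ)` and `φ_k(l) = φ_l(k)` is of the form
`φ_k(λ) = P(λ² + k², kλ)` for a single two-variable polynomial `P ∈ ℂ[X,Y]`. -/
theorem stmt_11 (m : ℕ) (φ : ℤ → ℂ → ℂ)
    (hpoly : ∀ k : ℤ, k.natAbs ≤ m → k % 2 = (m : ℤ) % 2 →
      ∃ p : Polynomial ℂ, ∀ z : ℂ, φ k z = p.eval z)
    (hsym : ∀ k : ℤ, k.natAbs ≤ m → k % 2 = (m : ℤ) % 2 → ∀ z : ℂ, φ k z = φ (-k) (-z))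
    (hint : ∀ k l : ℤ, k.natAbs ≤ m → l.natAbs ≤ m →
      k % 2 = (m : ℤ) % 2 → l % 2 = (m : ℤ) % 2 → φ k (l : ℂ) = φ l (k : ℂ)) :
    ∃ P : MvPolynomial (Fin 2) ℂ,
      ∀ k : ℤ, k.natAbs ≤ m → k % 2 = (m : ℤ) % 2 → ∀ z : ℂ,
        φ k z = MvPolynomial.eval ![z ^ 2 + (k : ℂ) ^ 2, (k : ℂ) * z] P := by
  choose! p hp using hpoly
  set S := (Finset.Icc (-(m : ℤ)) m).filter (fun k => k % 2 = (m : ℤ) % 2)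
  have hS : ∀ k, k ∈ S ↔ k.natAbs ≤ m ∧ k % 2 = (m : ℤ) % 2 := fun k => by
    simp only [S, Finset.mem_filter, Finset.mem_Icc]
    omega
  obtain ⟨P, hP⟩ := exists_curveEval_eq_of_neg_mem S
    (fun k hk => (hS _).mpr (by have := (hS k).mp hk; omega)) p
    (fun k hk => Polynomial.funext fun z => by
      obtain ⟨hk₁, hk₂⟩ := (hS k).mp hk
      obtain ⟨hk₁', hk₂'⟩ : (-k).natAbs ≤ m ∧ -k % 2 = (m : ℤ) % 2 := by omega
      rw [eval_comp, eval_neg, eval_X, ← hp k hk₁ hk₂, ← hp (-k) hk₁' hk₂', hsym k hk₁ hk₂,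
        neg_neg])
    (fun k hk l hl => by
      obtain ⟨hk₁, hk₂⟩ := (hS k).mp hk
      obtain ⟨hl₁, hl₂⟩ := (hS l).mp hl
      rw [← hp k hk₁ hk₂, ← hp l hl₁ hl₂, hint k l hk₁ hl₁ hk₂ hl₂])
  refine ⟨P, fun k hk₁ hk₂ z => ?_⟩
  rw [hp k hk₁ hk₂, ← hP k ((hS k).mpr ⟨hk₁, hk₂⟩), eval_curveEval]
end
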